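/- A Finsler metric F on an open set U ⊆ ℝⁿ (n ≥ 2) is of sectional flag curvature if and only if for every x ∈ U and all linearly independent y, v ∈ ℝⁿ the function t ↦ K(x, y + tv, v) has vanishing derivative at t = 0. -/

import Mathlib

open scoped BigOperators
open MeasureTheory

noncomputable section

namespace Paper

/-- `E n` is the model space ℝⁿ. -/
abbrev E (n : ℕ) := Fin n → ℝ

/-- `e n i` is the `i`-th standard basis vector of ℝⁿ. -/
def e (n : ℕ) (i : Fin n) : E n := Pi.single i 1

/-- Partial derivative of `f(x,y)` in the fiber variable `y^i`. -/
def pdy (n : ℕ) (f : E n → E n → ℝ) (i : Fin n) : E n → E n → ℝ :=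
  fun x y => fderiv ℝ (f x) y (e n i)

/-- Partial derivative of `f(x,y)` in the base variable `x^k`. -/
def pdx (n : ℕ) (f : E n → E n → ℝ) (k : Fin n) : E n → E n → ℝ :=
  fun x y => fderiv ℝ (fun x' => f x' y) x (e n k)

/-- The square `F²` of the metric. -/
def F2 (n : ℕ) (F : E n → E n → ℝ) : E n → E n → ℝ := fun x y => (F x y) ^ 2

/-- Fundamental tensor `g_{ij} = ½ [F²]_{y^i y^j}`. -/
def gm (n : ℕ) (F : E n → E n → ℝ) (i j : Fin n) : E n → E n → ℝ :=
  fun x y => (1 / 2 : ℝ) * pdy n (pdy n (F2 n F) j) i x y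

/-- The fundamental tensor as a matrix. -/
def gmat (n : ℕ) (F : E n → E n → ℝ) (x y : E n) : Matrix (Fin n) (Fin n) ℝ :=
  Matrix.of fun i j => gm n F i j x y

/-- The inverse fundamental tensor `g^{ij}`. -/
def ginv (n : ℕ) (F : E n → E n → ℝ) (x y : E n) : Matrix (Fin n) (Fin n) ℝ :=
  (gmat n F x y)⁻¹

/-- `F_{y^i}`. -/
def Fy (n : ℕ) (F : E n → E n → ℝ) (i : Fin n) : E n → E n → ℝ := pdy n F i

/-- Angular metric `h_{ij} = g_{ij} - F_{y^i} F_{y^j}`. -/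
def hm (n : ℕ) (F : E n → E n → ℝ) (i j : Fin n) : E n → E n → ℝ :=
  fun x y => gm n F i j x y - Fy n F i x y * Fy n F j x y

/-- Cartan tensor `C_{ijk} = ¼ [F²]_{y^i y^j y^k}`. -/
def Cartan (n : ℕ) (F : E n → E n → ℝ) (i j k : Fin n) : E n → E n → ℝ :=
  fun x y => (1 / 4 : ℝ) * pdy n (pdy n (pdy n (F2 n F) k) j) i x y

/-- Mean Cartan tensor `I_i = g^{jk} C_{ijk}`. -/
def meanCartan (n : ℕ) (F : E n → E n → ℝ) (i : Fin n) : E n → E n → ℝ :=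
  fun x y => ∑ j, ∑ k, ginv n F x y j k * Cartan n F i j k x y

/-- Matsumoto torsion `M_{ijk}`. -/
def Matsumoto (n : ℕ) (F : E n → E n → ℝ) (i j k : Fin n) : E n → E n → ℝ :=
  fun x y => Cartan n F i j k x y -
    (1 / ((n : ℝ) + 1)) * (hm n F i j x y * meanCartan n F k x y +
      hm n F j k x y * meanCartan n F i x y + hm n F k i x y * meanCartan n F j x y)

/-- Spray coefficients `G^i = ¼ g^{il} ([F²]_{x^k y^l} y^k - [F²]_{x^l})`. -/
def Spray (n : ℕ) (F : E n → E n → ℝ) (i : Fin n) : E n → E n → ℝ :=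
  fun x y => (1 / 4 : ℝ) * ∑ l, ginv n F x y i l *
    ((∑ k, pdx n (pdy n (F2 n F) l) k x y * y k) - pdx n (F2 n F) l x y)

/-- Riemann curvature `R^i_k`. -/
def RiemUp (n : ℕ) (F : E n → E n → ℝ) (i k : Fin n) : E n → E n → ℝ :=
  fun x y =>
    2 * pdx n (Spray n F i) k x y
    - (∑ j, y j * pdx n (pdy n (Spray n F i) k) j x y)
    + 2 * (∑ j, Spray n F j x y * pdy n (pdy n (Spray n F i) k) j x y)
    - ∑ j, pdy n (Spray n F i) j x y * pdy n (Spray n F j) k x y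

/-- Riemann curvature with lowered index `R_{jk} = g_{ij} R^i_k`. -/
def Rlow (n : ℕ) (F : E n → E n → ℝ) (j k : Fin n) : E n → E n → ℝ :=
  fun x y => ∑ i, gm n F i j x y * RiemUp n F i k x y

/-- Flag curvature `K(x,y,v)`. -/
def K (n : ℕ) (F : E n → E n → ℝ) (x y v : E n) : ℝ :=
  (∑ j, ∑ k, Rlow n F j k x y * v j * v k) /
    ((F x y) ^ 2 * ∑ j, ∑ k, hm n F j k x y * v j * v k)

/-- `F` is a Finsler metric on the open set `U ⊆ ℝⁿ`. -/
structure IsFinsler (n : ℕ) (U : Set (E n)) (F : E n → E n → ℝ) : Prop where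
  smooth : ContDiffOn ℝ (⊤ : ℕ∞) (fun p : E n × E n => F p.1 p.2) (U ×ˢ {y : E n | y ≠ 0})
  pos : ∀ x ∈ U, ∀ y : E n, y ≠ 0 → 0 < F x y
  homog : ∀ x ∈ U, ∀ y : E n, y ≠ 0 → ∀ c : ℝ, 0 < c → F x (c • y) = c * F x y
  posdef : ∀ x ∈ U, ∀ y : E n, y ≠ 0 → (gmat n F x y).PosDef

/-- `F` is of sectional flag curvature: `K` only depends on the section. -/
def SectionalFlagCurv (n : ℕ) (U : Set (E n)) (F : E n → E n → ℝ) : Prop :=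
  ∀ x ∈ U, ∀ y v y' v' : E n,
    LinearIndependent ℝ ![y, v] → LinearIndependent ℝ ![y', v'] →
    Submodule.span ℝ {y, v} = Submodule.span ℝ {y', v'} →
    K n F x y v = K n F x y' v'

/-- The flag curvature is isotropic at `x`. -/
def IsotropicAt (n : ℕ) (F : E n → E n → ℝ) (x : E n) : Prop :=
  ∃ c : ℝ, ∀ y v : E n, LinearIndependent ℝ ![y, v] → K n F x y v = c

/-- The spray vector field `G = y^i ∂/∂x^i - 2G^i ∂/∂y^i` acting on a function of `(x,y)`. -/
def Gop (n : ℕ) (F f : E n → E n → ℝ) : E n → E n → ℝ :=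
  fun x y => (∑ i, y i * pdx n f i x y) - 2 * ∑ i, Spray n F i x y * pdy n f i x y

/-- Dynamical derivative of a 1-index tensor. -/
def Dyn1 (n : ℕ) (F : E n → E n → ℝ) (T : Fin n → E n → E n → ℝ) (i : Fin n) :
    E n → E n → ℝ :=
  fun x y => Gop n F (T i) x y - ∑ m, pdy n (Spray n F m) i x y * T m x y

/-- Dynamical derivative of a 2-index tensor. -/
def Dyn2 (n : ℕ) (F : E n → E n → ℝ) (T : Fin n → Fin n → E n → E n → ℝ) (i j : Fin n) :
    E n → E n → ℝ :=
  fun x y => Gop n F (T i j) x y - (∑ m, pdy n (Spray n F m) i x y * T m j x y)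
    - ∑ m, pdy n (Spray n F m) j x y * T i m x y

/-- Dynamical derivative of a 3-index tensor. -/
def Dyn3 (n : ℕ) (F : E n → E n → ℝ) (T : Fin n → Fin n → Fin n → E n → E n → ℝ)
    (i j k : Fin n) : E n → E n → ℝ :=
  fun x y => Gop n F (T i j k) x y - (∑ m, pdy n (Spray n F m) i x y * T m j k x y)
    - (∑ m, pdy n (Spray n F m) j x y * T i m k x y)
    - ∑ m, pdy n (Spray n F m) k x y * T i j m x y

/-- `y` is a polar direction at `x`: `R_{jk} = κ F² h_{jk}` for some constant `κ`. -/
def IsPolarDir (n : ℕ) (F : E n → E n → ℝ) (x y : E n) : Prop :=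
  ∃ κ : ℝ, ∀ j k : Fin n, Rlow n F j k x y = κ * (F x y) ^ 2 * hm n F j k x y


section Aux

variable {n : ℕ} {U : Set (E n)}

/-- The open domain in the product space. -/
def Om (U : Set (E n)) : Set (E n × E n) := U ×ˢ {y : E n | y ≠ 0}

lemma isOpen_Om (hU : IsOpen U) : IsOpen (Om U) :=
  hU.prod (isOpen_compl_singleton)

lemma mem_Om {x y : E n} : (x, y) ∈ Om U ↔ x ∈ U ∧ y ≠ 0 := by
  simp [Om, Set.mem_prod]

/-- Smoothness of a two-variable function on `Om U`. -/
def Sm (U : Set (E n)) (f : E n → E n → ℝ) : Prop :=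
  ContDiffOn ℝ (⊤ : ℕ∞) (fun p : E n × E n => f p.1 p.2) (Om U)

lemma Sm.differentiableAt (hU : IsOpen U) {f : E n → E n → ℝ} (hf : Sm U f)
    {x y : E n} (hx : x ∈ U) (hy : y ≠ 0) :
    DifferentiableAt ℝ (fun p : E n × E n => f p.1 p.2) (x, y) := by
  have hp : (x, y) ∈ Om U := mem_Om.mpr ⟨hx, hy⟩
  exact (hf.contDiffAt ((isOpen_Om hU).mem_nhds hp)).differentiableAt (by simp)

lemma Sm.hasFDerivAt_sliceY (hU : IsOpen U) {f : E n → E n → ℝ} (hf : Sm U f)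
    {x y : E n} (hx : x ∈ U) (hy : y ≠ 0) :
    HasFDerivAt (f x)
      ((fderiv ℝ (fun p : E n × E n => f p.1 p.2) (x, y)).comp
        (ContinuousLinearMap.inr ℝ (E n) (E n))) y := by
  have h1 : HasFDerivAt (fun p : E n × E n => f p.1 p.2)
      (fderiv ℝ (fun p : E n × E n => f p.1 p.2) (x, y)) (x, y) :=
    (hf.differentiableAt hU hx hy).hasFDerivAt
  have h2 : HasFDerivAt (fun y' : E n => (x, y'))
      (ContinuousLinearMap.inr ℝ (E n) (E n)) y :=
    (hasFDerivAt_const x y).prodMk (hasFDerivAt_id y)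
  exact h1.comp y h2

lemma Sm.hasFDerivAt_sliceX (hU : IsOpen U) {f : E n → E n → ℝ} (hf : Sm U f)
    {x y : E n} (hx : x ∈ U) (hy : y ≠ 0) :
    HasFDerivAt (fun x' => f x' y)
      ((fderiv ℝ (fun p : E n × E n => f p.1 p.2) (x, y)).comp
        (ContinuousLinearMap.inl ℝ (E n) (E n))) x := by
  have h1 : HasFDerivAt (fun p : E n × E n => f p.1 p.2)
      (fderiv ℝ (fun p : E n × E n => f p.1 p.2) (x, y)) (x, y) :=
    (hf.differentiableAt hU hx hy).hasFDerivAt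
  have h2 : HasFDerivAt (fun x' : E n => (x', y))
      (ContinuousLinearMap.inl ℝ (E n) (E n)) x :=
    (hasFDerivAt_id x).prodMk (hasFDerivAt_const y x)
  exact h1.comp x h2

lemma Sm.diffY (hU : IsOpen U) {f : E n → E n → ℝ} (hf : Sm U f)
    {x y : E n} (hx : x ∈ U) (hy : y ≠ 0) : DifferentiableAt ℝ (f x) y :=
  (hf.hasFDerivAt_sliceY hU hx hy).differentiableAt

lemma Sm.diffX (hU : IsOpen U) {f : E n → E n → ℝ} (hf : Sm U f)
    {x y : E n} (hx : x ∈ U) (hy : y ≠ 0) :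
    DifferentiableAt ℝ (fun x' => f x' y) x :=
  (hf.hasFDerivAt_sliceX hU hx hy).differentiableAt

lemma Sm.pdy_eq (hU : IsOpen U) {f : E n → E n → ℝ} (hf : Sm U f)
    {x y : E n} (hx : x ∈ U) (hy : y ≠ 0) (i : Fin n) :
    pdy n f i x y
      = fderiv ℝ (fun p : E n × E n => f p.1 p.2) (x, y) (0, e n i) := by
  have := (hf.hasFDerivAt_sliceY hU hx hy).fderiv
  simp [pdy, this]

lemma Sm.pdx_eq (hU : IsOpen U) {f : E n → E n → ℝ} (hf : Sm U f)
    {x y : E n} (hx : x ∈ U) (hy : y ≠ 0) (k : Fin n) :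
    pdx n f k x y
      = fderiv ℝ (fun p : E n × E n => f p.1 p.2) (x, y) (e n k, 0) := by
  have := (hf.hasFDerivAt_sliceX hU hx hy).fderiv
  simp [pdx, this]


section smclosure

lemma Sm.fderiv_smooth (hU : IsOpen U) {f : E n → E n → ℝ} (hf : Sm U f) :
    ContDiffOn ℝ (⊤ : ℕ∞) (fderiv ℝ (fun p : E n × E n => f p.1 p.2)) (Om U) :=
  hf.fderiv_of_isOpen (isOpen_Om hU) (by simp)

lemma Sm.pdy (hU : IsOpen U) {f : E n → E n → ℝ} (hf : Sm U f) (i : Fin n) :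
    Sm U (pdy n f i) := by
  have h1 : ContDiffOn ℝ (⊤ : ℕ∞)
      (fun p : E n × E n => fderiv ℝ (fun p : E n × E n => f p.1 p.2) p (0, e n i))
      (Om U) :=
    (ContinuousLinearMap.apply ℝ ℝ ((0, e n i) : E n × E n)).contDiff.comp_contDiffOn
      (Sm.fderiv_smooth hU hf)
  refine h1.congr ?_
  rintro ⟨x, y⟩ hp
  rcases mem_Om.mp hp with ⟨hx, hy⟩
  exact (hf.pdy_eq hU hx hy i)

lemma Sm.pdx (hU : IsOpen U) {f : E n → E n → ℝ} (hf : Sm U f) (k : Fin n) :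
    Sm U (pdx n f k) := by
  have h1 : ContDiffOn ℝ (⊤ : ℕ∞)
      (fun p : E n × E n => fderiv ℝ (fun p : E n × E n => f p.1 p.2) p (e n k, 0))
      (Om U) :=
    (ContinuousLinearMap.apply ℝ ℝ ((e n k, 0) : E n × E n)).contDiff.comp_contDiffOn
      (Sm.fderiv_smooth hU hf)
  refine h1.congr ?_
  rintro ⟨x, y⟩ hp
  rcases mem_Om.mp hp with ⟨hx, hy⟩
  exact (hf.pdx_eq hU hx hy k)

lemma Sm.const (c : ℝ) : Sm U (fun _ _ => c) := contDiffOn_const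

lemma Sm.coordY (k : Fin n) : Sm U (fun _ (y : E n) => y k) := by
  have : ContDiff ℝ (⊤ : ℕ∞) (fun p : E n × E n => p.2 k) := by
    fun_prop
  exact this.contDiffOn

lemma Sm.add {f g : E n → E n → ℝ} (hf : Sm U f) (hg : Sm U g) :
    Sm U (fun x y => f x y + g x y) := ContDiffOn.add hf hg

lemma Sm.sub {f g : E n → E n → ℝ} (hf : Sm U f) (hg : Sm U g) :
    Sm U (fun x y => f x y - g x y) := ContDiffOn.sub hf hg

lemma Sm.mul {f g : E n → E n → ℝ} (hf : Sm U f) (hg : Sm U g) :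
    Sm U (fun x y => f x y * g x y) := ContDiffOn.mul hf hg

lemma Sm.cmul {f : E n → E n → ℝ} (c : ℝ) (hf : Sm U f) :
    Sm U (fun x y => c * f x y) := contDiffOn_const.mul hf

lemma Sm.sum {ι : Type*} (s : Finset ι) {f : ι → E n → E n → ℝ}
    (hf : ∀ i ∈ s, Sm U (f i)) :
    Sm U (fun x y => ∑ i ∈ s, f i x y) := by
  classical
  induction s using Finset.induction_on with
  | empty => simpa using (Sm.const 0 : Sm U _)
  | insert a s hnot ih =>
      have := Sm.add (hf a (Finset.mem_insert_self a s))
        (ih fun i hi => hf i (Finset.mem_insert_of_mem hi))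
      refine this.congr ?_
      rintro ⟨x, y⟩ _
      simp [Finset.sum_insert hnot]

end smclosure


section pdrules

variable (hU : IsOpen U)

lemma sum_e_smul (v : E n) : ∑ i, v i • e n i = v := by
  funext j
  simp [e, Pi.single_apply, Finset.sum_apply]

lemma clm_apply_eq_sum (L : E n →L[ℝ] ℝ) (v : E n) :
    L v = ∑ i, v i * L (e n i) := by
  conv_lhs => rw [← sum_e_smul v]
  rw [map_sum]
  simp [smul_eq_mul]

variable {x y : E n} (hx : x ∈ U) (hy : y ≠ 0)
include hU hx hy

lemma pdy_add {f g : E n → E n → ℝ} (hf : Sm U f) (hg : Sm U g) (i : Fin n) :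
    pdy n (fun x y => f x y + g x y) i x y = pdy n f i x y + pdy n g i x y := by
  have := fderiv_fun_add (𝕜 := ℝ) (hf.diffY hU hx hy) (hg.diffY hU hx hy)
  simp only [pdy]
  rw [this]
  rfl

lemma pdy_sub {f g : E n → E n → ℝ} (hf : Sm U f) (hg : Sm U g) (i : Fin n) :
    pdy n (fun x y => f x y - g x y) i x y = pdy n f i x y - pdy n g i x y := by
  have := fderiv_fun_sub (𝕜 := ℝ) (hf.diffY hU hx hy) (hg.diffY hU hx hy)
  simp only [pdy]
  rw [this]
  rfl

lemma pdy_mul {f g : E n → E n → ℝ} (hf : Sm U f) (hg : Sm U g) (i : Fin n) :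
    pdy n (fun x y => f x y * g x y) i x y
      = pdy n f i x y * g x y + f x y * pdy n g i x y := by
  have := fderiv_fun_mul (𝕜 := ℝ) (hf.diffY hU hx hy) (hg.diffY hU hx hy)
  simp only [pdy]
  rw [this]
  simp [smul_eq_mul]
  ring

lemma pdy_cmul {f : E n → E n → ℝ} (c : ℝ) (hf : Sm U f) (i : Fin n) :
    pdy n (fun x y => c * f x y) i x y = c * pdy n f i x y := by
  have := fderiv_const_mul (𝕜 := ℝ) (hf.diffY hU hx hy) c
  simp only [pdy]
  rw [this]
  simp [smul_eq_mul]

lemma pdy_const (c : ℝ) (i : Fin n) :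
    pdy n (fun _ _ => c) i x y = 0 := by
  simp [pdy, fderiv_const]

lemma pdy_sum {ι : Type*} (s : Finset ι) {f : ι → E n → E n → ℝ}
    (hf : ∀ j ∈ s, Sm U (f j)) (i : Fin n) :
    pdy n (fun x y => ∑ j ∈ s, f j x y) i x y = ∑ j ∈ s, pdy n (f j) i x y := by
  have h0 := fderiv_fun_sum (𝕜 := ℝ) (u := s)
    (A := fun j (y' : E n) => f j x y') (x := y)
    (fun j hj => (hf j hj).diffY hU hx hy)
  have h1 : fderiv ℝ (fun y => ∑ j ∈ s, f j x y) y = ∑ j ∈ s, fderiv ℝ (f j x) y := h0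
  simp only [pdy]
  rw [h1]
  simp

lemma pdy_coordY (k i : Fin n) :
    pdy n (fun _ (y : E n) => y k) i x y = e n i k := by
  have : fderiv ℝ (fun y : E n => y k) y = ContinuousLinearMap.proj k := by
    exact (ContinuousLinearMap.proj (R := ℝ) (φ := fun _ : Fin n => ℝ) k).fderiv
  simp [pdy, this]

lemma pdx_add {f g : E n → E n → ℝ} (hf : Sm U f) (hg : Sm U g) (k : Fin n) :
    pdx n (fun x y => f x y + g x y) k x y = pdx n f k x y + pdx n g k x y := by
  have := fderiv_fun_add (𝕜 := ℝ) (hf.diffX hU hx hy) (hg.diffX hU hx hy)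
  simp only [pdx]
  rw [show (fun x' => f x' y + g x' y) = fun x' => (fun x'' => f x'' y) x' + (fun x'' => g x'' y) x' from rfl, this]
  rfl

lemma pdx_sub {f g : E n → E n → ℝ} (hf : Sm U f) (hg : Sm U g) (k : Fin n) :
    pdx n (fun x y => f x y - g x y) k x y = pdx n f k x y - pdx n g k x y := by
  have := fderiv_fun_sub (𝕜 := ℝ) (hf.diffX hU hx hy) (hg.diffX hU hx hy)
  simp only [pdx]
  rw [show (fun x' => f x' y - g x' y) = fun x' => (fun x'' => f x'' y) x' - (fun x'' => g x'' y) x' from rfl, this]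
  rfl

lemma pdx_mul {f g : E n → E n → ℝ} (hf : Sm U f) (hg : Sm U g) (k : Fin n) :
    pdx n (fun x y => f x y * g x y) k x y
      = pdx n f k x y * g x y + f x y * pdx n g k x y := by
  have := fderiv_fun_mul (𝕜 := ℝ) (hf.diffX hU hx hy) (hg.diffX hU hx hy)
  simp only [pdx]
  rw [show (fun x' => f x' y * g x' y) = fun x' => (fun x'' => f x'' y) x' * (fun x'' => g x'' y) x' from rfl, this]
  simp [smul_eq_mul]
  ring

lemma pdx_cmul {f : E n → E n → ℝ} (c : ℝ) (hf : Sm U f) (k : Fin n) :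
    pdx n (fun x y => c * f x y) k x y = c * pdx n f k x y := by
  have := fderiv_const_mul (𝕜 := ℝ) (hf.diffX hU hx hy) c
  simp only [pdx]
  rw [show (fun x' => c * f x' y) = fun x' => c * (fun x'' => f x'' y) x' from rfl, this]
  simp [smul_eq_mul]

lemma pdx_const (c : ℝ) (k : Fin n) :
    pdx n (fun _ _ => c) k x y = 0 := by
  simp [pdx, fderiv_const]

lemma pdx_sum {ι : Type*} (s : Finset ι) {f : ι → E n → E n → ℝ}
    (hf : ∀ j ∈ s, Sm U (f j)) (k : Fin n) :
    pdx n (fun x y => ∑ j ∈ s, f j x y) k x y = ∑ j ∈ s, pdx n (f j) k x y := by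
  have h0 := fderiv_fun_sum (𝕜 := ℝ) (u := s)
    (A := fun j (x' : E n) => f j x' y) (x := x)
    (fun j hj => (hf j hj).diffX hU hx hy)
  have h1 : fderiv ℝ (fun x' => ∑ j ∈ s, f j x' y) x = ∑ j ∈ s, fderiv ℝ (fun x' => f j x' y) x := h0
  simp only [pdx]
  rw [h1]
  simp

lemma pdx_coordY (k i : Fin n) :
    pdx n (fun _ (y : E n) => y k) i x y = 0 := by
  simp [pdx, fderiv_const]

end pdrules


section symm

variable {f : E n → E n → ℝ} {x y : E n}

/-- Representation of iterated partials via the second derivative of the uncurried map. -/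
lemma second_rep (hU : IsOpen U) (hf : Sm U f) (hx : x ∈ U) (hy : y ≠ 0) :
    ∀ v w : E n × E n,
      (fderiv ℝ (fderiv ℝ (fun p : E n × E n => f p.1 p.2)) (x, y) v) w
        = (fderiv ℝ (fderiv ℝ (fun p : E n × E n => f p.1 p.2)) (x, y) w) v := by
  set unc := fun p : E n × E n => f p.1 p.2 with hunc
  have hOm : IsOpen (Om U) := isOpen_Om hU
  have hp : (x, y) ∈ Om U := mem_Om.mpr ⟨hx, hy⟩
  have ev : ∀ᶠ p in nhds (x, y), HasFDerivAt unc (fderiv ℝ unc p) p := by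
    filter_upwards [hOm.mem_nhds hp] with p hp'
    rcases mem_Om.mp (by simpa using hp') with ⟨hx', hy'⟩
    exact (hf.differentiableAt hU hx' hy').hasFDerivAt
  have hA : DifferentiableAt ℝ (fderiv ℝ unc) (x, y) :=
    ((hf.fderiv_smooth hU).contDiffAt (hOm.mem_nhds hp)).differentiableAt (by simp)
  exact second_derivative_symmetric_of_eventually ev hA.hasFDerivAt

/-- `pdx` of an `A p w`-type function. -/
lemma fderiv_apply_fderiv (hU : IsOpen U) (hf : Sm U f) (hx : x ∈ U) (hy : y ≠ 0)
    (w v : E n × E n) :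
    fderiv ℝ (fun p : E n × E n => fderiv ℝ (fun q : E n × E n => f q.1 q.2) p w) (x, y) v
      = (fderiv ℝ (fderiv ℝ (fun q : E n × E n => f q.1 q.2)) (x, y) v) w := by
  have hA : DifferentiableAt ℝ (fderiv ℝ (fun q : E n × E n => f q.1 q.2)) (x, y) :=
    ((hf.fderiv_smooth hU).contDiffAt ((isOpen_Om hU).mem_nhds (mem_Om.mpr ⟨hx, hy⟩))).differentiableAt (by simp)
  have h := ((ContinuousLinearMap.apply ℝ ℝ w).hasFDerivAt.comp (x, y) hA.hasFDerivAt).fderiv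
  rw [show (fun p : E n × E n => fderiv ℝ (fun q : E n × E n => f q.1 q.2) p w)
      = (ContinuousLinearMap.apply ℝ ℝ w) ∘ (fderiv ℝ (fun q : E n × E n => f q.1 q.2)) from rfl, h]
  rfl

lemma pdx_pdy_rep (hU : IsOpen U) (hf : Sm U f) (hx : x ∈ U) (hy : y ≠ 0) (i k : Fin n) :
    pdx n (pdy n f i) k x y
      = (fderiv ℝ (fderiv ℝ (fun q : E n × E n => f q.1 q.2)) (x, y) (e n k, 0)) (0, e n i) := by
  have hev : (fun x' => pdy n f i x' y)
      =ᶠ[nhds x] fun x' => fderiv ℝ (fun q : E n × E n => f q.1 q.2) (x', y) (0, e n i) := by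
    filter_upwards [hU.mem_nhds hx] with x' hx'
    exact hf.pdy_eq hU hx' hy i
  have h2 : HasFDerivAt (fun x' : E n => (x', y))
      (ContinuousLinearMap.inl ℝ (E n) (E n)) x :=
    (hasFDerivAt_id x).prodMk (hasFDerivAt_const y x)
  have hA : DifferentiableAt ℝ (fderiv ℝ (fun q : E n × E n => f q.1 q.2)) (x, y) :=
    ((hf.fderiv_smooth hU).contDiffAt ((isOpen_Om hU).mem_nhds (mem_Om.mpr ⟨hx, hy⟩))).differentiableAt (by simp)
  have hg : HasFDerivAt (fun p : E n × E n => fderiv ℝ (fun q : E n × E n => f q.1 q.2) p (0, e n i))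
      (fderiv ℝ (fun p : E n × E n => fderiv ℝ (fun q : E n × E n => f q.1 q.2) p (0, e n i)) (x, y)) (x, y) := by
    refine DifferentiableAt.hasFDerivAt ?_
    exact (ContinuousLinearMap.apply ℝ ℝ ((0, e n i) : E n × E n)).differentiable.differentiableAt.comp _ hA
  have hc : HasFDerivAt (fun x' : E n => fderiv ℝ (fun q : E n × E n => f q.1 q.2) (x', y) (0, e n i))
      ((fderiv ℝ (fun p : E n × E n => fderiv ℝ (fun q : E n × E n => f q.1 q.2) p (0, e n i)) (x, y)).comp
        (ContinuousLinearMap.inl ℝ (E n) (E n))) x :=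
    HasFDerivAt.comp (g := fun p : E n × E n => fderiv ℝ (fun q : E n × E n => f q.1 q.2) p (0, e n i)) x hg h2
  calc pdx n (pdy n f i) k x y
      = fderiv ℝ (fun x' => fderiv ℝ (fun q : E n × E n => f q.1 q.2) (x', y) (0, e n i)) x (e n k) := by
        rw [pdx, hev.fderiv_eq]
    _ = (fderiv ℝ (fderiv ℝ (fun q : E n × E n => f q.1 q.2)) (x, y) (e n k, 0)) (0, e n i) := by
        rw [hc.fderiv]
        simp only [ContinuousLinearMap.coe_comp', Function.comp_apply,
          ContinuousLinearMap.inl_apply]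
        rw [fderiv_apply_fderiv hU hf hx hy]

lemma pdy_pdx_rep (hU : IsOpen U) (hf : Sm U f) (hx : x ∈ U) (hy : y ≠ 0) (i k : Fin n) :
    pdy n (pdx n f k) i x y
      = (fderiv ℝ (fderiv ℝ (fun q : E n × E n => f q.1 q.2)) (x, y) (0, e n i)) (e n k, 0) := by
  have hev : (fun y' => pdx n f k x y')
      =ᶠ[nhds y] fun y' => fderiv ℝ (fun q : E n × E n => f q.1 q.2) (x, y') (e n k, 0) := by
    filter_upwards [isOpen_compl_singleton.mem_nhds hy] with y' hy'
    exact hf.pdx_eq hU hx hy' k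
  have h2 : HasFDerivAt (fun y' : E n => (x, y'))
      (ContinuousLinearMap.inr ℝ (E n) (E n)) y :=
    (hasFDerivAt_const x y).prodMk (hasFDerivAt_id y)
  have hA : DifferentiableAt ℝ (fderiv ℝ (fun q : E n × E n => f q.1 q.2)) (x, y) :=
    ((hf.fderiv_smooth hU).contDiffAt ((isOpen_Om hU).mem_nhds (mem_Om.mpr ⟨hx, hy⟩))).differentiableAt (by simp)
  have hg : HasFDerivAt (fun p : E n × E n => fderiv ℝ (fun q : E n × E n => f q.1 q.2) p (e n k, 0))
      (fderiv ℝ (fun p : E n × E n => fderiv ℝ (fun q : E n × E n => f q.1 q.2) p (e n k, 0)) (x, y)) (x, y) := by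
    refine DifferentiableAt.hasFDerivAt ?_
    exact (ContinuousLinearMap.apply ℝ ℝ ((e n k, 0) : E n × E n)).differentiable.differentiableAt.comp _ hA
  have hc : HasFDerivAt (fun y' : E n => fderiv ℝ (fun q : E n × E n => f q.1 q.2) (x, y') (e n k, 0))
      ((fderiv ℝ (fun p : E n × E n => fderiv ℝ (fun q : E n × E n => f q.1 q.2) p (e n k, 0)) (x, y)).comp
        (ContinuousLinearMap.inr ℝ (E n) (E n))) y := hg.comp y h2
  calc pdy n (pdx n f k) i x y
      = fderiv ℝ (fun y' => fderiv ℝ (fun q : E n × E n => f q.1 q.2) (x, y') (e n k, 0)) y (e n i) := by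
        rw [pdy, hev.fderiv_eq]
    _ = (fderiv ℝ (fderiv ℝ (fun q : E n × E n => f q.1 q.2)) (x, y) (0, e n i)) (e n k, 0) := by
        rw [hc.fderiv]
        simp only [ContinuousLinearMap.coe_comp', Function.comp_apply,
          ContinuousLinearMap.inr_apply]
        rw [fderiv_apply_fderiv hU hf hx hy]

lemma pdy_pdy_rep (hU : IsOpen U) (hf : Sm U f) (hx : x ∈ U) (hy : y ≠ 0) (i j : Fin n) :
    pdy n (pdy n f i) j x y
      = (fderiv ℝ (fderiv ℝ (fun q : E n × E n => f q.1 q.2)) (x, y) (0, e n j)) (0, e n i) := by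
  have hev : (fun y' => pdy n f i x y')
      =ᶠ[nhds y] fun y' => fderiv ℝ (fun q : E n × E n => f q.1 q.2) (x, y') (0, e n i) := by
    filter_upwards [isOpen_compl_singleton.mem_nhds hy] with y' hy'
    exact hf.pdy_eq hU hx hy' i
  have h2 : HasFDerivAt (fun y' : E n => (x, y'))
      (ContinuousLinearMap.inr ℝ (E n) (E n)) y :=
    (hasFDerivAt_const x y).prodMk (hasFDerivAt_id y)
  have hA : DifferentiableAt ℝ (fderiv ℝ (fun q : E n × E n => f q.1 q.2)) (x, y) :=
    ((hf.fderiv_smooth hU).contDiffAt ((isOpen_Om hU).mem_nhds (mem_Om.mpr ⟨hx, hy⟩))).differentiableAt (by simp)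
  have hg : HasFDerivAt (fun p : E n × E n => fderiv ℝ (fun q : E n × E n => f q.1 q.2) p (0, e n i))
      (fderiv ℝ (fun p : E n × E n => fderiv ℝ (fun q : E n × E n => f q.1 q.2) p (0, e n i)) (x, y)) (x, y) := by
    refine DifferentiableAt.hasFDerivAt ?_
    exact (ContinuousLinearMap.apply ℝ ℝ ((0, e n i) : E n × E n)).differentiable.differentiableAt.comp _ hA
  have hc : HasFDerivAt (fun y' : E n => fderiv ℝ (fun q : E n × E n => f q.1 q.2) (x, y') (0, e n i))
      ((fderiv ℝ (fun p : E n × E n => fderiv ℝ (fun q : E n × E n => f q.1 q.2) p (0, e n i)) (x, y)).comp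
        (ContinuousLinearMap.inr ℝ (E n) (E n))) y := hg.comp y h2
  calc pdy n (pdy n f i) j x y
      = fderiv ℝ (fun y' => fderiv ℝ (fun q : E n × E n => f q.1 q.2) (x, y') (0, e n i)) y (e n j) := by
        rw [pdy, hev.fderiv_eq]
    _ = (fderiv ℝ (fderiv ℝ (fun q : E n × E n => f q.1 q.2)) (x, y) (0, e n j)) (0, e n i) := by
        rw [hc.fderiv]
        simp only [ContinuousLinearMap.coe_comp', Function.comp_apply,
          ContinuousLinearMap.inr_apply]
        rw [fderiv_apply_fderiv hU hf hx hy]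

/-- Mixed partials commute. -/
lemma pdx_pdy_comm (hU : IsOpen U) (hf : Sm U f) (hx : x ∈ U) (hy : y ≠ 0) (i k : Fin n) :
    pdx n (pdy n f i) k x y = pdy n (pdx n f k) i x y := by
  rw [pdx_pdy_rep hU hf hx hy, pdy_pdx_rep hU hf hx hy,
    second_rep hU hf hx hy]

/-- Second fiber partials commute. -/
lemma pdy_pdy_comm (hU : IsOpen U) (hf : Sm U f) (hx : x ∈ U) (hy : y ≠ 0) (i j : Fin n) :
    pdy n (pdy n f i) j x y = pdy n (pdy n f j) i x y := by
  rw [pdy_pdy_rep hU hf hx hy, pdy_pdy_rep hU hf hx hy,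
    second_rep hU hf hx hy]

end symm


section homog

/-- `f(x, ·)` is positively homogeneous of degree `r` on the punctured fibers over `U`. -/
def Hom (U : Set (E n)) (r : ℕ) (f : E n → E n → ℝ) : Prop :=
  ∀ x ∈ U, ∀ y : E n, y ≠ 0 → ∀ c : ℝ, 0 < c → f x (c • y) = c ^ r * f x y

lemma hom_pdy {f : E n → E n → ℝ} {r : ℕ} (hU : IsOpen U) (hf : Sm U f)
    (h : Hom U (r + 1) f) (i : Fin n) : Hom U r (pdy n f i) := by
  intro x hx y hy c hc
  have hcy : c • y ≠ 0 := smul_ne_zero (ne_of_gt hc) hy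
  have hev : (fun y' => f x (c • y')) =ᶠ[nhds y] fun y' => c ^ (r + 1) * f x y' := by
    filter_upwards [isOpen_compl_singleton.mem_nhds hy] with y' hy'
    exact h x hx y' hy' c hc
  have h1 : HasFDerivAt (fun y' : E n => f x (c • y'))
      ((fderiv ℝ (f x) (c • y)).comp (c • ContinuousLinearMap.id ℝ (E n))) y := by
    have hs : HasFDerivAt (fun y' : E n => c • y') (c • ContinuousLinearMap.id ℝ (E n)) y :=
      (hasFDerivAt_id y).const_smul c
    exact ((hf.diffY hU hx hcy).hasFDerivAt).comp y hs
  have h2 : HasFDerivAt (fun y' : E n => c ^ (r + 1) * f x y')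
      ((c ^ (r + 1)) • fderiv ℝ (f x) y) y := by
    simpa [Pi.smul_def, smul_eq_mul] using
      ((hf.diffY hU hx hy).hasFDerivAt).const_smul (c ^ (r + 1))
  have heq : ((fderiv ℝ (f x) (c • y)).comp (c • ContinuousLinearMap.id ℝ (E n)))
      = (c ^ (r + 1)) • fderiv ℝ (f x) y := by
    rw [← h1.fderiv, ← h2.fderiv]
    exact hev.fderiv_eq
  have happ := congrArg (fun L : E n →L[ℝ] ℝ => L (e n i)) heq
  simp only [ContinuousLinearMap.comp_apply, ContinuousLinearMap.smul_apply,
    ContinuousLinearMap.coe_smul', Pi.smul_apply, ContinuousLinearMap.id_apply,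
    smul_eq_mul, _root_.map_smul] at happ
  have hkey : c * pdy n f i x (c • y) = c ^ (r + 1) * pdy n f i x y := by
    simpa [pdy, smul_eq_mul] using happ
  have hc0 : (c : ℝ) ≠ 0 := ne_of_gt hc
  have : c * pdy n f i x (c • y) = c * (c ^ r * pdy n f i x y) := by
    rw [hkey]; ring
  exact mul_left_cancel₀ hc0 this

lemma hom_pdx {f : E n → E n → ℝ} {r : ℕ} (hU : IsOpen U) (hf : Sm U f)
    (h : Hom U r f) (k : Fin n) : Hom U r (pdx n f k) := by
  intro x hx y hy c hc
  have hcy : c • y ≠ 0 := smul_ne_zero (ne_of_gt hc) hy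
  have hev : (fun x' => f x' (c • y)) =ᶠ[nhds x] fun x' => c ^ r * f x' y := by
    filter_upwards [hU.mem_nhds hx] with x' hx'
    exact h x' hx' y hy c hc
  have e2 : fderiv ℝ (fun x' => c ^ r * f x' y) x
      = (c ^ r) • fderiv ℝ (fun x' => f x' y) x :=
    fderiv_const_mul (hf.diffX hU hx hy) _
  calc pdx n f k x (c • y)
      = fderiv ℝ (fun x' => f x' (c • y)) x (e n k) := rfl
    _ = fderiv ℝ (fun x' => c ^ r * f x' y) x (e n k) := by rw [hev.fderiv_eq]
    _ = c ^ r * pdx n f k x y := by rw [e2]; simp [pdx, smul_eq_mul]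

/-- Euler's relation. -/
lemma hom_euler {f : E n → E n → ℝ} {r : ℕ} (hU : IsOpen U) (hf : Sm U f)
    (h : Hom U r f) {x y : E n} (hx : x ∈ U) (hy : y ≠ 0) :
    ∑ i, y i * pdy n f i x y = (r : ℝ) * f x y := by
  have hd : HasDerivAt (fun c : ℝ => f x (c • y)) (fderiv ℝ (f x) y y) 1 := by
    have hs : HasDerivAt (fun c : ℝ => c • y) y 1 := by
      simpa using (hasDerivAt_id (1 : ℝ)).smul_const y
    have hdy : DifferentiableAt ℝ (f x) ((1 : ℝ) • y) := by
      simpa using hf.diffY hU hx hy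
    have := (hdy.hasFDerivAt.comp_hasDerivAt 1 hs)
    simpa [Function.comp_def] using this
  have hev : (fun c : ℝ => f x (c • y)) =ᶠ[nhds 1] fun c : ℝ => c ^ r * f x y := by
    filter_upwards [isOpen_Ioi.mem_nhds (by norm_num : (0:ℝ) < 1)] with c hc
    exact h x hx y hy c hc
  have hd2 : HasDerivAt (fun c : ℝ => c ^ r * f x y) ((r : ℝ) * f x y) 1 := by
    have := (hasDerivAt_pow r (1 : ℝ)).mul_const (f x y)
    simpa using this
  have key : fderiv ℝ (f x) y y = (r : ℝ) * f x y := by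
    rw [← hd.deriv, ← hd2.deriv]
    exact hev.deriv_eq
  calc ∑ i, y i * pdy n f i x y
      = fderiv ℝ (f x) y y := (clm_apply_eq_sum (fderiv ℝ (f x) y) y).symm
    _ = (r : ℝ) * f x y := key

end homog



section instances

variable {F : E n → E n → ℝ}

lemma Sm.prod {ι : Type*} (s : Finset ι) {f : ι → E n → E n → ℝ}
    (hf : ∀ i ∈ s, Sm U (f i)) :
    Sm U (fun x y => ∏ i ∈ s, f i x y) := by
  classical
  induction s using Finset.induction_on with
  | empty => simpa using (Sm.const 1 : Sm U _)
  | insert a s hnot ih =>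
      have := Sm.mul (hf a (Finset.mem_insert_self a s))
        (ih fun i hi => hf i (Finset.mem_insert_of_mem hi))
      refine this.congr ?_
      rintro ⟨x, y⟩ _
      simp [Finset.prod_insert hnot]

lemma Sm.det {M : E n → E n → Matrix (Fin n) (Fin n) ℝ}
    (h : ∀ i j, Sm U (fun x y => M x y i j)) :
    Sm U (fun x y => (M x y).det) := by
  have h1 : Sm U (fun x y => ∑ σ : Equiv.Perm (Fin n),
      (Equiv.Perm.sign σ : ℝ) * ∏ i, M x y (σ i) i) :=
    Sm.sum Finset.univ fun σ _ => Sm.cmul _ (Sm.prod Finset.univ fun i _ => h (σ i) i)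
  refine h1.congr ?_
  rintro ⟨x, y⟩ _
  show (M x y).det = _
  rw [Matrix.det_apply]
  refine Finset.sum_congr rfl fun σ _ => ?_
  simp [Units.smul_def, zsmul_eq_mul]

variable (hU : IsOpen U) (hF : IsFinsler n U F)

lemma smF (hF : IsFinsler n U F) : Sm U F := hF.smooth.of_le (by simp)

lemma smF2 (hF : IsFinsler n U F) : Sm U (F2 n F) := by
  have : Sm U (fun x y => F x y * F x y) := Sm.mul (smF hF) (smF hF)
  refine this.congr ?_
  rintro ⟨x, y⟩ _
  simp [F2, sq]

lemma smGm (hU : IsOpen U) (hF : IsFinsler n U F) (i j : Fin n) : Sm U (gm n F i j) :=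
  Sm.cmul _ (((smF2 hF).pdy hU j).pdy hU i)

lemma detPos (hF : IsFinsler n U F) {x y : E n} (hx : x ∈ U) (hy : y ≠ 0) :
    0 < (gmat n F x y).det := (hF.posdef x hx y hy).det_pos

lemma smDet (hU : IsOpen U) (hF : IsFinsler n U F) :
    Sm U (fun x y => (gmat n F x y).det) :=
  Sm.det fun i j => smGm hU hF i j

lemma smGinv (hU : IsOpen U) (hF : IsFinsler n U F) (i j : Fin n) :
    Sm U (fun x y => ginv n F x y i j) := by
  classical
  have hadj : Sm U (fun x y => (gmat n F x y).adjugate i j) := by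
    have h1 : Sm U (fun x y =>
        ((gmat n F x y).updateRow j (Pi.single i 1)).det) := by
      refine Sm.det fun p q => ?_
      by_cases hpj : p = j
      · subst hpj
        have : Sm U (fun _ _ => (Pi.single i 1 : E n) q) := Sm.const _
        refine this.congr ?_
        rintro ⟨x, y⟩ _
        simp [Matrix.updateRow_apply]
      · have := smGm hU hF p q
        refine this.congr ?_
        rintro ⟨x, y⟩ _
        simp [Matrix.updateRow_apply, hpj, gmat]
    refine h1.congr ?_
    rintro ⟨x, y⟩ _
    simp [Matrix.adjugate_apply]
  have hinvdet : Sm U (fun x y => ((gmat n F x y).det)⁻¹) := by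
    refine ContDiffOn.inv (smDet hU hF) ?_
    rintro ⟨x, y⟩ hp
    rcases mem_Om.mp hp with ⟨hx, hy⟩
    exact (detPos hF hx hy).ne'
  have : Sm U (fun x y => ((gmat n F x y).det)⁻¹ * (gmat n F x y).adjugate i j) :=
    Sm.mul hinvdet hadj
  refine this.congr ?_
  rintro ⟨x, y⟩ hp
  rcases mem_Om.mp hp with ⟨hx, hy⟩
  simp [ginv, Matrix.inv_def, Ring.inverse_eq_inv']

lemma smSpray (hU : IsOpen U) (hF : IsFinsler n U F) (i : Fin n) :
    Sm U (Spray n F i) := by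
  have h1 : Sm U (fun x y => ∑ l, ginv n F x y i l *
      ((∑ k, pdx n (pdy n (F2 n F) l) k x y * y k) - pdx n (F2 n F) l x y)) := by
    refine Sm.sum Finset.univ fun l _ => Sm.mul (smGinv hU hF i l) ?_
    refine Sm.sub ?_ ((smF2 hF).pdx hU l)
    exact Sm.sum Finset.univ fun k _ =>
      Sm.mul (((smF2 hF).pdy hU l).pdx hU k) (Sm.coordY k)
  exact Sm.cmul _ h1

lemma smRiemUp (hU : IsOpen U) (hF : IsFinsler n U F) (i k : Fin n) :
    Sm U (RiemUp n F i k) := by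
  have t1 : Sm U (fun x y => 2 * pdx n (Spray n F i) k x y) :=
    Sm.cmul _ ((smSpray hU hF i).pdx hU k)
  have t2 : Sm U (fun x y => ∑ j, y j * pdx n (pdy n (Spray n F i) k) j x y) :=
    Sm.sum Finset.univ fun j _ =>
      Sm.mul (Sm.coordY j) (((smSpray hU hF i).pdy hU k).pdx hU j)
  have t3 : Sm U (fun x y =>
      2 * (∑ j, Spray n F j x y * pdy n (pdy n (Spray n F i) k) j x y)) :=
    Sm.cmul _ (Sm.sum Finset.univ fun j _ =>
      Sm.mul (smSpray hU hF j) (((smSpray hU hF i).pdy hU k).pdy hU j))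
  have t4 : Sm U (fun x y =>
      ∑ j, pdy n (Spray n F i) j x y * pdy n (Spray n F j) k x y) :=
    Sm.sum Finset.univ fun j _ =>
      Sm.mul ((smSpray hU hF i).pdy hU j) ((smSpray hU hF j).pdy hU k)
  have : Sm U (fun x y => 2 * pdx n (Spray n F i) k x y
      - (∑ j, y j * pdx n (pdy n (Spray n F i) k) j x y)
      + 2 * (∑ j, Spray n F j x y * pdy n (pdy n (Spray n F i) k) j x y)
      - ∑ j, pdy n (Spray n F i) j x y * pdy n (Spray n F j) k x y) :=
    Sm.sub (Sm.add (Sm.sub t1 t2) t3) t4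
  exact this

lemma smRlow (hU : IsOpen U) (hF : IsFinsler n U F) (j k : Fin n) :
    Sm U (Rlow n F j k) :=
  Sm.sum Finset.univ fun i _ => Sm.mul (smGm hU hF i j) (smRiemUp hU hF i k)

lemma smHm (hU : IsOpen U) (hF : IsFinsler n U F) (i j : Fin n) :
    Sm U (hm n F i j) :=
  Sm.sub (smGm hU hF i j) (Sm.mul ((smF hF).pdy hU i) ((smF hF).pdy hU j))

end instances


section hominstances

variable {F : E n → E n → ℝ}

lemma homF (hF : IsFinsler n U F) : Hom U 1 F := by
  intro x hx y hy c hc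
  simpa using hF.homog x hx y hy c hc

lemma homF2 (hF : IsFinsler n U F) : Hom U 2 (F2 n F) := by
  intro x hx y hy c hc
  simp only [F2, hF.homog x hx y hy c hc]
  ring

lemma homHy (hU : IsOpen U) (hF : IsFinsler n U F) (l : Fin n) :
    Hom U 1 (pdy n (F2 n F) l) :=
  hom_pdy hU (smF2 hF) (homF2 hF) l

lemma homHx (hU : IsOpen U) (hF : IsFinsler n U F) (k : Fin n) :
    Hom U 2 (pdx n (F2 n F) k) :=
  hom_pdx hU (smF2 hF) (homF2 hF) k

lemma homHyy (hU : IsOpen U) (hF : IsFinsler n U F) (l m : Fin n) :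
    Hom U 0 (pdy n (pdy n (F2 n F) l) m) :=
  hom_pdy hU ((smF2 hF).pdy hU l) (homHy hU hF l) m

lemma homHxy (hU : IsOpen U) (hF : IsFinsler n U F) (l k : Fin n) :
    Hom U 1 (pdx n (pdy n (F2 n F) l) k) :=
  hom_pdx hU ((smF2 hF).pdy hU l) (homHy hU hF l) k

lemma gmat_hom (hU : IsOpen U) (hF : IsFinsler n U F) {x y : E n} (hx : x ∈ U)
    (hy : y ≠ 0) {c : ℝ} (hc : 0 < c) : gmat n F x (c • y) = gmat n F x y := by
  ext i j
  have := homHyy hU hF j i x hx y hy c hc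
  simp only [pow_zero, one_mul] at this
  simp [gmat, gm, this]

lemma ginv_hom (hU : IsOpen U) (hF : IsFinsler n U F) {x y : E n} (hx : x ∈ U)
    (hy : y ≠ 0) {c : ℝ} (hc : 0 < c) : ginv n F x (c • y) = ginv n F x y := by
  simp [ginv, gmat_hom hU hF hx hy hc]

lemma homSpray (hU : IsOpen U) (hF : IsFinsler n U F) (i : Fin n) :
    Hom U 2 (Spray n F i) := by
  intro x hx y hy c hc
  simp only [Spray]
  rw [ginv_hom hU hF hx hy hc]
  have hterm : ∀ l, ginv n F x y i l *
      ((∑ k, pdx n (pdy n (F2 n F) l) k x (c • y) * (c • y) k)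
        - pdx n (F2 n F) l x (c • y))
      = c ^ 2 * (ginv n F x y i l *
      ((∑ k, pdx n (pdy n (F2 n F) l) k x y * y k) - pdx n (F2 n F) l x y)) := by
    intro l
    have hsum : (∑ k, pdx n (pdy n (F2 n F) l) k x (c • y) * (c • y) k)
        = c ^ 2 * ∑ k, pdx n (pdy n (F2 n F) l) k x y * y k := by
      rw [Finset.mul_sum]
      refine Finset.sum_congr rfl fun k _ => ?_
      rw [homHxy hU hF l k x hx y hy c hc]
      simp only [Pi.smul_apply, smul_eq_mul]
      ring
    rw [hsum, homHx hU hF l x hx y hy c hc]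
    ring
  rw [Finset.sum_congr rfl fun l _ => hterm l, ← Finset.mul_sum]
  ring

lemma homSprayY (hU : IsOpen U) (hF : IsFinsler n U F) (i j : Fin n) :
    Hom U 1 (pdy n (Spray n F i) j) :=
  hom_pdy hU (smSpray hU hF i) (homSpray hU hF i) j

lemma homSprayX (hU : IsOpen U) (hF : IsFinsler n U F) (i k : Fin n) :
    Hom U 2 (pdx n (Spray n F i) k) :=
  hom_pdx hU (smSpray hU hF i) (homSpray hU hF i) k

end hominstances


section identities

variable {F : E n → E n → ℝ} {x y : E n}

lemma pdx_pdx_rep {f : E n → E n → ℝ} (hU : IsOpen U) (hf : Sm U f) (hx : x ∈ U)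
    (hy : y ≠ 0) (j k : Fin n) :
    pdx n (pdx n f j) k x y
      = (fderiv ℝ (fderiv ℝ (fun q : E n × E n => f q.1 q.2)) (x, y) (e n k, 0)) (e n j, 0) := by
  have hev : (fun x' => pdx n f j x' y)
      =ᶠ[nhds x] fun x' => fderiv ℝ (fun q : E n × E n => f q.1 q.2) (x', y) (e n j, 0) := by
    filter_upwards [hU.mem_nhds hx] with x' hx'
    exact hf.pdx_eq hU hx' hy j
  have h2 : HasFDerivAt (fun x' : E n => (x', y))
      (ContinuousLinearMap.inl ℝ (E n) (E n)) x :=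
    (hasFDerivAt_id x).prodMk (hasFDerivAt_const y x)
  have hA : DifferentiableAt ℝ (fderiv ℝ (fun q : E n × E n => f q.1 q.2)) (x, y) :=
    ((hf.fderiv_smooth hU).contDiffAt ((isOpen_Om hU).mem_nhds (mem_Om.mpr ⟨hx, hy⟩))).differentiableAt (by simp)
  have hg : HasFDerivAt (fun p : E n × E n => fderiv ℝ (fun q : E n × E n => f q.1 q.2) p (e n j, 0))
      (fderiv ℝ (fun p : E n × E n => fderiv ℝ (fun q : E n × E n => f q.1 q.2) p (e n j, 0)) (x, y)) (x, y) := by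
    refine DifferentiableAt.hasFDerivAt ?_
    exact (ContinuousLinearMap.apply ℝ ℝ ((e n j, 0) : E n × E n)).differentiable.differentiableAt.comp _ hA
  have hc : HasFDerivAt (fun x' : E n => fderiv ℝ (fun q : E n × E n => f q.1 q.2) (x', y) (e n j, 0))
      ((fderiv ℝ (fun p : E n × E n => fderiv ℝ (fun q : E n × E n => f q.1 q.2) p (e n j, 0)) (x, y)).comp
        (ContinuousLinearMap.inl ℝ (E n) (E n))) x :=
    HasFDerivAt.comp (g := fun p : E n × E n => fderiv ℝ (fun q : E n × E n => f q.1 q.2) p (e n j, 0)) x hg h2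
  calc pdx n (pdx n f j) k x y
      = fderiv ℝ (fun x' => fderiv ℝ (fun q : E n × E n => f q.1 q.2) (x', y) (e n j, 0)) x (e n k) := by
        rw [pdx, hev.fderiv_eq]
    _ = (fderiv ℝ (fderiv ℝ (fun q : E n × E n => f q.1 q.2)) (x, y) (e n k, 0)) (e n j, 0) := by
        rw [hc.fderiv]
        simp only [ContinuousLinearMap.coe_comp', Function.comp_apply,
          ContinuousLinearMap.inl_apply]
        rw [fderiv_apply_fderiv hU hf hx hy]

lemma pdx_pdx_comm {f : E n → E n → ℝ} (hU : IsOpen U) (hf : Sm U f) (hx : x ∈ U)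
    (hy : y ≠ 0) (j k : Fin n) :
    pdx n (pdx n f j) k x y = pdx n (pdx n f k) j x y := by
  rw [pdx_pdx_rep hU hf hx hy, pdx_pdx_rep hU hf hx hy, second_rep hU hf hx hy]

lemma pdy_congr {f g : E n → E n → ℝ}
    (h : ∀ x' ∈ U, ∀ y' : E n, y' ≠ 0 → f x' y' = g x' y')
    (hU : IsOpen U) (hx : x ∈ U) (hy : y ≠ 0) (i : Fin n) :
    pdy n f i x y = pdy n g i x y := by
  have hev : f x =ᶠ[nhds y] g x := by
    filter_upwards [isOpen_compl_singleton.mem_nhds hy] with y' hy'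
    exact h x hx y' hy'
  simp only [pdy, hev.fderiv_eq]

lemma pdx_congr {f g : E n → E n → ℝ}
    (h : ∀ x' ∈ U, ∀ y' : E n, y' ≠ 0 → f x' y' = g x' y')
    (hU : IsOpen U) (hx : x ∈ U) (hy : y ≠ 0) (k : Fin n) :
    pdx n f k x y = pdx n g k x y := by
  have hev : (fun x' => f x' y) =ᶠ[nhds x] fun x' => g x' y := by
    filter_upwards [hU.mem_nhds hx] with x' hx'
    exact h x' hx' y hy
  simp only [pdx, hev.fderiv_eq]

variable (hU : IsOpen U) (hF : IsFinsler n U F) (hx : x ∈ U) (hy : y ≠ 0)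
include hU hF hx hy

lemma gm_symm (i j : Fin n) : gm n F i j x y = gm n F j i x y := by
  simp only [gm]
  rw [pdy_pdy_comm hU (smF2 hF) hx hy]

/-- `∑ i, gm m i * ginv i l = δ_{m l}`. -/
lemma gmat_mul_ginv (m l : Fin n) :
    ∑ i, gm n F m i x y * ginv n F x y i l = if m = l then 1 else 0 := by
  have h := Matrix.mul_nonsing_inv (gmat n F x y) (detPos hF hx hy).ne'.isUnit
  have := congrFun (congrFun h m) l
  rw [Matrix.mul_apply] at this
  simpa [gmat, ginv, Matrix.one_apply] using this

omit hU hF hx hy in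
lemma swap_sum' (a : Fin n → ℝ) (b : Fin n → Fin n → ℝ) :
    ∑ i, a i * ∑ j, b i j = ∑ j, ∑ i, a i * b i j := by
  simp_rw [Finset.mul_sum]
  exact Finset.sum_comm

omit hU hF hx hy in
lemma swap_sum (c : Fin n → ℝ) (A : Fin n → Fin n → ℝ) :
    ∑ m, c m * ∑ i, A m i = ∑ i, ∑ m, c m * A m i := by
  simp_rw [Finset.mul_sum]
  exact Finset.sum_comm

/-- The spray equation `(S)`:  `∑ i, 2 G^i H_{y^i y^m} = H_{x^k y^m} y^k - H_{x^m}`. -/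
lemma idS (m : Fin n) :
    ∑ i, 2 * Spray n F i x y * pdy n (pdy n (F2 n F) m) i x y
      = (∑ k, pdx n (pdy n (F2 n F) m) k x y * y k) - pdx n (F2 n F) m x y := by
  have hrw : ∀ i, 2 * Spray n F i x y * pdy n (pdy n (F2 n F) m) i x y
      = ∑ l, (gm n F m i x y * ginv n F x y i l) *
          ((∑ k, pdx n (pdy n (F2 n F) l) k x y * y k) - pdx n (F2 n F) l x y) := by
    intro i
    have hgm : pdy n (pdy n (F2 n F) m) i x y = 2 * gm n F i m x y := by
      simp only [gm]; ring
    rw [hgm, Spray, gm_symm hU hF hx hy i m]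
    rw [show 2 * ((1 / 4 : ℝ) * ∑ l, ginv n F x y i l *
        ((∑ k, pdx n (pdy n (F2 n F) l) k x y * y k) - pdx n (F2 n F) l x y)) *
        (2 * gm n F m i x y)
      = gm n F m i x y * ∑ l, ginv n F x y i l *
        ((∑ k, pdx n (pdy n (F2 n F) l) k x y * y k) - pdx n (F2 n F) l x y) from by ring]
    rw [Finset.mul_sum]
    refine Finset.sum_congr rfl fun l _ => ?_
    ring
  rw [Finset.sum_congr rfl fun i _ => hrw i, Finset.sum_comm]
  have hfin : ∀ l, ∑ i, (gm n F m i x y * ginv n F x y i l) *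
      ((∑ k, pdx n (pdy n (F2 n F) l) k x y * y k) - pdx n (F2 n F) l x y)
      = (if m = l then 1 else 0) *
        ((∑ k, pdx n (pdy n (F2 n F) l) k x y * y k) - pdx n (F2 n F) l x y) := by
    intro l
    rw [← Finset.sum_mul, gmat_mul_ginv hU hF hx hy]
  rw [Finset.sum_congr rfl fun l _ => hfin l]
  simp
/-- Euler-type relations for `H = F²`. -/
lemma eulH : ∑ i, y i * pdy n (F2 n F) i x y = 2 * F2 n F x y := by
  simpa using hom_euler hU (smF2 hF) (homF2 hF) hx hy

lemma eulHy (i : Fin n) :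
    ∑ m, y m * pdy n (pdy n (F2 n F) i) m x y = pdy n (F2 n F) i x y := by
  simpa using hom_euler hU ((smF2 hF).pdy hU i) (homHy hU hF i) hx hy

lemma eulHx (k : Fin n) :
    ∑ m, y m * pdy n (pdx n (F2 n F) k) m x y = 2 * pdx n (F2 n F) k x y := by
  simpa using hom_euler hU ((smF2 hF).pdx hU k) (homHx hU hF k) hx hy

lemma eulSpray (j : Fin n) :
    ∑ k, y k * pdy n (Spray n F j) k x y = 2 * Spray n F j x y := by
  simpa using hom_euler hU (smSpray hU hF j) (homSpray hU hF j) hx hy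

lemma eulSprayY (i j : Fin n) :
    ∑ k, y k * pdy n (pdy n (Spray n F i) j) k x y = pdy n (Spray n F i) j x y := by
  simpa using hom_euler hU ((smSpray hU hF i).pdy hU j) (homSprayY hU hF i j) hx hy

lemma eulSprayX (i j : Fin n) :
    ∑ k, y k * pdy n (pdx n (Spray n F i) j) k x y = 2 * pdx n (Spray n F i) j x y := by
  simpa using hom_euler hU ((smSpray hU hF i).pdx hU j) (homSprayX hU hF i j) hx hy

/-- The energy identity `(E)`: `∑ 2 G^i H_{y^i} = ∑ y^k H_{x^k}`. -/
lemma idE : ∑ i, 2 * Spray n F i x y * pdy n (F2 n F) i x y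
    = ∑ k, y k * pdx n (F2 n F) k x y := by
  have h1 : ∑ m, y m * (∑ i, 2 * Spray n F i x y * pdy n (pdy n (F2 n F) m) i x y)
      = ∑ m, y m * ((∑ k, pdx n (pdy n (F2 n F) m) k x y * y k) - pdx n (F2 n F) m x y) :=
    Finset.sum_congr rfl fun m _ => by rw [idS hU hF hx hy m]
  have hL : ∑ m, y m * (∑ i, 2 * Spray n F i x y * pdy n (pdy n (F2 n F) m) i x y)
      = ∑ i, 2 * Spray n F i x y * pdy n (F2 n F) i x y := by
    rw [swap_sum]
    refine Finset.sum_congr rfl fun i _ => ?_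
    have hcomm : ∀ m, pdy n (pdy n (F2 n F) m) i x y = pdy n (pdy n (F2 n F) i) m x y :=
      fun m => pdy_pdy_comm hU (smF2 hF) hx hy m i
    calc ∑ m, y m * (2 * Spray n F i x y * pdy n (pdy n (F2 n F) m) i x y)
        = 2 * Spray n F i x y * ∑ m, y m * pdy n (pdy n (F2 n F) i) m x y := by
          rw [Finset.mul_sum]
          exact Finset.sum_congr rfl fun m _ => by rw [hcomm m]; ring
      _ = 2 * Spray n F i x y * pdy n (F2 n F) i x y := by
          rw [eulHy hU hF hx hy i]
  have hR : ∑ m, y m * ((∑ k, pdx n (pdy n (F2 n F) m) k x y * y k) - pdx n (F2 n F) m x y)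
      = ∑ k, y k * pdx n (F2 n F) k x y := by
    have hsplit : ∀ m, y m * ((∑ k, pdx n (pdy n (F2 n F) m) k x y * y k) - pdx n (F2 n F) m x y)
        = (∑ k, y k * (y m * pdy n (pdx n (F2 n F) k) m x y)) - y m * pdx n (F2 n F) m x y := by
      intro m
      rw [mul_sub]
      congr 1
      rw [Finset.mul_sum]
      refine Finset.sum_congr rfl fun k _ => ?_
      rw [pdx_pdy_comm hU (smF2 hF) hx hy m k]
      ring
    rw [Finset.sum_congr rfl fun m _ => hsplit m, Finset.sum_sub_distrib, Finset.sum_comm]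
    have hin : ∀ k, ∑ m, y k * (y m * pdy n (pdx n (F2 n F) k) m x y)
        = y k * (2 * pdx n (F2 n F) k x y) := by
      intro k
      rw [← Finset.mul_sum, eulHx hU hF hx hy k]
    rw [Finset.sum_congr rfl fun k _ => hin k]
    rw [← Finset.sum_sub_distrib]
    refine Finset.sum_congr rfl fun k _ => ?_
    ring
  rw [← hL, h1, hR]

/-- `(E1)`: `∑ i, G^i_{y^k} H_{y^i} = H_{x^k}`. -/
lemma idE1 (k : Fin n) :
    ∑ i, pdy n (Spray n F i) k x y * pdy n (F2 n F) i x y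
      = pdx n (F2 n F) k x y := by
  have hsmL : ∀ i : Fin n, Sm U (fun x y => 2 * Spray n F i x y * pdy n (F2 n F) i x y) :=
    fun i => Sm.mul (Sm.cmul 2 (smSpray hU hF i)) ((smF2 hF).pdy hU i)
  have hsmR : ∀ m : Fin n, Sm U (fun x y => y m * pdx n (F2 n F) m x y) :=
    fun m => Sm.mul (Sm.coordY m) ((smF2 hF).pdx hU m)
  have hcong : pdy n (fun x y => ∑ i, 2 * Spray n F i x y * pdy n (F2 n F) i x y) k x y
      = pdy n (fun x y => ∑ m, y m * pdx n (F2 n F) m x y) k x y :=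
    pdy_congr (fun x' hx' y' hy' => idE hU hF hx' hy') hU hx hy k
  have hLrule : pdy n (fun x y => ∑ i, 2 * Spray n F i x y * pdy n (F2 n F) i x y) k x y
      = ∑ i, (2 * pdy n (Spray n F i) k x y * pdy n (F2 n F) i x y
          + 2 * Spray n F i x y * pdy n (pdy n (F2 n F) i) k x y) := by
    rw [pdy_sum hU hx hy Finset.univ (fun i _ => hsmL i) k]
    refine Finset.sum_congr rfl fun i _ => ?_
    rw [pdy_mul hU hx hy (Sm.cmul 2 (smSpray hU hF i)) ((smF2 hF).pdy hU i) k,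
      pdy_cmul hU hx hy 2 (smSpray hU hF i) k]
  have hRrule : pdy n (fun x y => ∑ m, y m * pdx n (F2 n F) m x y) k x y
      = pdx n (F2 n F) k x y + ∑ m, y m * pdy n (pdx n (F2 n F) m) k x y := by
    rw [pdy_sum hU hx hy Finset.univ (fun m _ => hsmR m) k]
    have hterm : ∀ m, pdy n (fun x y => y m * pdx n (F2 n F) m x y) k x y
        = e n k m * pdx n (F2 n F) m x y + y m * pdy n (pdx n (F2 n F) m) k x y := by
      intro m
      rw [pdy_mul hU hx hy (Sm.coordY m) ((smF2 hF).pdx hU m) k,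
        pdy_coordY hU hx hy m k]
    rw [Finset.sum_congr rfl fun m _ => hterm m, Finset.sum_add_distrib]
    congr 1
    rw [Finset.sum_eq_single k]
    · simp [e]
    · intro m _ hmk
      simp [e, Pi.single_apply, Ne.symm hmk]
    · intro h; exact absurd (Finset.mem_univ k) h
  rw [hLrule, hRrule] at hcong
  rw [Finset.sum_add_distrib] at hcong
  -- rewrite the second sums
  have h2 : ∑ i, 2 * Spray n F i x y * pdy n (pdy n (F2 n F) i) k x y
      = (∑ m, pdx n (pdy n (F2 n F) k) m x y * y m) - pdx n (F2 n F) k x y := by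
    rw [← idS hU hF hx hy k]
    exact Finset.sum_congr rfl fun i _ => by
      rw [pdy_pdy_comm hU (smF2 hF) hx hy i k]
  have h3 : ∑ m, y m * pdy n (pdx n (F2 n F) m) k x y
      = ∑ m, pdx n (pdy n (F2 n F) k) m x y * y m := by
    refine Finset.sum_congr rfl fun m _ => ?_
    rw [pdx_pdy_comm hU (smF2 hF) hx hy k m]
    ring
  rw [h2, h3] at hcong
  have h4 : ∑ i, 2 * pdy n (Spray n F i) k x y * pdy n (F2 n F) i x y
      = 2 * ∑ i, pdy n (Spray n F i) k x y * pdy n (F2 n F) i x y := by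
    rw [Finset.mul_sum]
    exact Finset.sum_congr rfl fun i _ => by ring
  rw [h4] at hcong
  linarith [hcong]

/-- `(E2)`: `x`-derivative of `(E1)`. -/
lemma idE2 (k m : Fin n) :
    ∑ i, (pdx n (pdy n (Spray n F i) k) m x y * pdy n (F2 n F) i x y
        + pdy n (Spray n F i) k x y * pdx n (pdy n (F2 n F) i) m x y)
      = pdx n (pdx n (F2 n F) k) m x y := by
  have hsm : ∀ i : Fin n, Sm U (fun x y => pdy n (Spray n F i) k x y * pdy n (F2 n F) i x y) :=
    fun i => Sm.mul ((smSpray hU hF i).pdy hU k) ((smF2 hF).pdy hU i)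
  have hcong : pdx n (fun x y => ∑ i, pdy n (Spray n F i) k x y * pdy n (F2 n F) i x y) m x y
      = pdx n (pdx n (F2 n F) k) m x y :=
    pdx_congr (fun x' hx' y' hy' => idE1 hU hF hx' hy' k) hU hx hy m
  rw [← hcong, pdx_sum hU hx hy Finset.univ (fun i _ => hsm i) m]
  refine Finset.sum_congr rfl fun i _ => ?_
  rw [pdx_mul hU hx hy ((smSpray hU hF i).pdy hU k) ((smF2 hF).pdy hU i) m]

/-- `(E3)`: `y`-derivative of `(E1)`. -/
lemma idE3 (k m : Fin n) :
    ∑ i, (pdy n (pdy n (Spray n F i) k) m x y * pdy n (F2 n F) i x y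
        + pdy n (Spray n F i) k x y * pdy n (pdy n (F2 n F) i) m x y)
      = pdy n (pdx n (F2 n F) k) m x y := by
  have hsm : ∀ i : Fin n, Sm U (fun x y => pdy n (Spray n F i) k x y * pdy n (F2 n F) i x y) :=
    fun i => Sm.mul ((smSpray hU hF i).pdy hU k) ((smF2 hF).pdy hU i)
  have hcong : pdy n (fun x y => ∑ i, pdy n (Spray n F i) k x y * pdy n (F2 n F) i x y) m x y
      = pdy n (pdx n (F2 n F) k) m x y :=
    pdy_congr (fun x' hx' y' hy' => idE1 hU hF hx' hy' k) hU hx hy m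
  rw [← hcong, pdy_sum hU hx hy Finset.univ (fun i _ => hsm i) m]
  refine Finset.sum_congr rfl fun i _ => ?_
  rw [pdy_mul hU hx hy ((smSpray hU hF i).pdy hU k) ((smF2 hF).pdy hU i) m]

/-- `(E4)`: `x`-derivative of `(E)`. -/
lemma idE4 (m : Fin n) :
    ∑ i, (2 * pdx n (Spray n F i) m x y * pdy n (F2 n F) i x y
        + 2 * Spray n F i x y * pdx n (pdy n (F2 n F) i) m x y)
      = ∑ j, y j * pdx n (pdx n (F2 n F) j) m x y := by
  have hsmL : ∀ i : Fin n, Sm U (fun x y => 2 * Spray n F i x y * pdy n (F2 n F) i x y) :=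
    fun i => Sm.mul (Sm.cmul 2 (smSpray hU hF i)) ((smF2 hF).pdy hU i)
  have hsmR : ∀ j : Fin n, Sm U (fun x y => y j * pdx n (F2 n F) j x y) :=
    fun j => Sm.mul (Sm.coordY j) ((smF2 hF).pdx hU j)
  have hcong : pdx n (fun x y => ∑ i, 2 * Spray n F i x y * pdy n (F2 n F) i x y) m x y
      = pdx n (fun x y => ∑ j, y j * pdx n (F2 n F) j x y) m x y :=
    pdx_congr (fun x' hx' y' hy' => idE hU hF hx' hy') hU hx hy m
  have hLrule : pdx n (fun x y => ∑ i, 2 * Spray n F i x y * pdy n (F2 n F) i x y) m x y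
      = ∑ i, (2 * pdx n (Spray n F i) m x y * pdy n (F2 n F) i x y
          + 2 * Spray n F i x y * pdx n (pdy n (F2 n F) i) m x y) := by
    rw [pdx_sum hU hx hy Finset.univ (fun i _ => hsmL i) m]
    refine Finset.sum_congr rfl fun i _ => ?_
    rw [pdx_mul hU hx hy (Sm.cmul 2 (smSpray hU hF i)) ((smF2 hF).pdy hU i) m,
      pdx_cmul hU hx hy 2 (smSpray hU hF i) m]
  have hRrule : pdx n (fun x y => ∑ j, y j * pdx n (F2 n F) j x y) m x y
      = ∑ j, y j * pdx n (pdx n (F2 n F) j) m x y := by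
    rw [pdx_sum hU hx hy Finset.univ (fun j _ => hsmR j) m]
    refine Finset.sum_congr rfl fun j _ => ?_
    rw [pdx_mul hU hx hy (Sm.coordY j) ((smF2 hF).pdx hU j) m,
      pdx_coordY hU hx hy j m]
    ring
  rw [hLrule, hRrule] at hcong
  exact hcong

/-- The key identity `∑ i, H_{y^i} R^i_k = 0`. -/
lemma ellR (k : Fin n) :
    ∑ i, pdy n (F2 n F) i x y * RiemUp n F i k x y = 0 := by
  -- atoms
  set P1 := ∑ j, y j * pdx n (pdx n (F2 n F) k) j x y with hP1
  set Q2 := ∑ i, 2 * Spray n F i x y * pdx n (pdy n (F2 n F) i) k x y with hQ2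
  set W := ∑ i, pdy n (Spray n F i) k x y * (∑ j, y j * pdx n (pdy n (F2 n F) i) j x y) with hW
  set DD := ∑ i, pdy n (Spray n F i) k x y * pdx n (F2 n F) i x y with hDD
  set A := ∑ i, 2 * pdx n (Spray n F i) k x y * pdy n (F2 n F) i x y with hA0
  set B := ∑ i, pdy n (F2 n F) i x y * ∑ j, y j * pdx n (pdy n (Spray n F i) k) j x y with hB0
  set C := ∑ i, pdy n (F2 n F) i x y *
    (2 * ∑ j, Spray n F j x y * pdy n (pdy n (Spray n F i) k) j x y) with hC0
  set D := ∑ i, pdy n (F2 n F) i x y *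
    ∑ j, pdy n (Spray n F i) j x y * pdy n (Spray n F j) k x y with hD0
  -- expansion of the goal
  have hexp : ∑ i, pdy n (F2 n F) i x y * RiemUp n F i k x y = A - B + C - D := by
    rw [hA0, hB0, hC0, hD0, ← Finset.sum_sub_distrib, ← Finset.sum_add_distrib,
      ← Finset.sum_sub_distrib]
    refine Finset.sum_congr rfl fun i _ => ?_
    simp only [RiemUp]
    ring
  -- A = P1 - Q2 via (E4)
  have hA : A = P1 - Q2 := by
    have h4 := idE4 hU hF hx hy k
    rw [Finset.sum_add_distrib] at h4
    have hswap : ∑ j, y j * pdx n (pdx n (F2 n F) j) k x y = P1 := by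
      rw [hP1]
      exact Finset.sum_congr rfl fun j _ => by
        rw [pdx_pdx_comm hU (smF2 hF) hx hy j k]
    rw [hswap] at h4
    rw [hA0, hQ2]
    linarith [h4]
  -- B = P1 - W via (E2)
  have hB : B = P1 - W := by
    have h1 : B = ∑ j, y j * ∑ i, pdx n (pdy n (Spray n F i) k) j x y * pdy n (F2 n F) i x y := by
      rw [hB0, swap_sum']
      refine Finset.sum_congr rfl fun j _ => ?_
      rw [Finset.mul_sum]
      refine Finset.sum_congr rfl fun i _ => ?_
      ring
    have h2 : ∀ j, ∑ i, pdx n (pdy n (Spray n F i) k) j x y * pdy n (F2 n F) i x y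
        = pdx n (pdx n (F2 n F) k) j x y
          - ∑ i, pdy n (Spray n F i) k x y * pdx n (pdy n (F2 n F) i) j x y := by
      intro j
      have := idE2 hU hF hx hy k j
      rw [Finset.sum_add_distrib] at this
      linarith [this]
    have h3 : ∑ j, y j * ∑ i, pdy n (Spray n F i) k x y * pdx n (pdy n (F2 n F) i) j x y
        = W := by
      rw [hW, swap_sum']
      refine Finset.sum_congr rfl fun i _ => ?_
      rw [Finset.mul_sum]
      refine Finset.sum_congr rfl fun j _ => ?_
      ring
    rw [h1, Finset.sum_congr rfl fun j _ => by rw [h2 j, mul_sub]]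
    rw [Finset.sum_sub_distrib, h3, hP1]
  -- C = Q2 - W + DD via (E3), (S)
  have hC : C = Q2 - W + DD := by
    have h1 : C = ∑ j, 2 * Spray n F j x y *
        ∑ i, pdy n (pdy n (Spray n F i) k) j x y * pdy n (F2 n F) i x y := by
      rw [hC0, swap_sum']
      refine Finset.sum_congr rfl fun j _ => ?_
      rw [Finset.mul_sum, Finset.mul_sum]
      refine Finset.sum_congr rfl fun i _ => ?_
      ring
    have h2 : ∀ j, ∑ i, pdy n (pdy n (Spray n F i) k) j x y * pdy n (F2 n F) i x y
        = pdy n (pdx n (F2 n F) k) j x y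
          - ∑ i, pdy n (Spray n F i) k x y * pdy n (pdy n (F2 n F) i) j x y := by
      intro j
      have := idE3 hU hF hx hy k j
      rw [Finset.sum_add_distrib] at this
      linarith [this]
    have hq : ∑ j, 2 * Spray n F j x y * pdy n (pdx n (F2 n F) k) j x y = Q2 := by
      rw [hQ2]
      refine Finset.sum_congr rfl fun j _ => ?_
      rw [pdx_pdy_comm hU (smF2 hF) hx hy j k]
    have h4 : ∑ j, 2 * Spray n F j x y *
        ∑ i, pdy n (Spray n F i) k x y * pdy n (pdy n (F2 n F) i) j x y
        = W - DD := by
      have h5 : ∑ j, 2 * Spray n F j x y *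
          ∑ i, pdy n (Spray n F i) k x y * pdy n (pdy n (F2 n F) i) j x y
          = ∑ i, pdy n (Spray n F i) k x y *
              ∑ j, 2 * Spray n F j x y * pdy n (pdy n (F2 n F) i) j x y := by
        rw [swap_sum']
        refine Finset.sum_congr rfl fun i _ => ?_
        rw [Finset.mul_sum]
        refine Finset.sum_congr rfl fun j _ => ?_
        ring
      rw [h5]
      have h6 : ∀ i, ∑ j, 2 * Spray n F j x y * pdy n (pdy n (F2 n F) i) j x y
          = (∑ j, y j * pdx n (pdy n (F2 n F) i) j x y) - pdx n (F2 n F) i x y := by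
        intro i
        rw [idS hU hF hx hy i]
        congr 1
        exact Finset.sum_congr rfl fun j _ => by ring
      rw [Finset.sum_congr rfl fun i _ => by rw [h6 i, mul_sub], Finset.sum_sub_distrib,
        hW, hDD]
    rw [h1, Finset.sum_congr rfl fun j _ => by rw [h2 j, mul_sub],
      Finset.sum_sub_distrib, hq, h4]
    ring
  -- D = DD via (E1)
  have hD : D = DD := by
    have h1 : D = ∑ j, pdy n (Spray n F j) k x y *
        ∑ i, pdy n (Spray n F i) j x y * pdy n (F2 n F) i x y := by
      rw [hD0, swap_sum']
      refine Finset.sum_congr rfl fun j _ => ?_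
      rw [Finset.mul_sum]
      refine Finset.sum_congr rfl fun i _ => ?_
      ring
    rw [h1, hDD]
    refine Finset.sum_congr rfl fun j _ => ?_
    rw [idE1 hU hF hx hy j]
  rw [hexp]
  linarith [hA, hB, hC, hD]

end identities





section contractions

variable {F : E n → E n → ℝ} {x y : E n}
variable (hU : IsOpen U) (hF : IsFinsler n U F) (hx : x ∈ U) (hy : y ≠ 0)
include hU hF hx hy

/-- `R^i_k y^k = 0`. -/
lemma Riem_y (i : Fin n) : ∑ k, y k * RiemUp n F i k x y = 0 := by
  have hexp : ∀ k, y k * RiemUp n F i k x y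
      = y k * (2 * pdx n (Spray n F i) k x y)
        - y k * (∑ j, y j * pdx n (pdy n (Spray n F i) k) j x y)
        + y k * (2 * ∑ j, Spray n F j x y * pdy n (pdy n (Spray n F i) k) j x y)
        - y k * (∑ j, pdy n (Spray n F i) j x y * pdy n (Spray n F j) k x y) := by
    intro k
    simp only [RiemUp]
    ring
  rw [Finset.sum_congr rfl fun k _ => hexp k]
  rw [Finset.sum_sub_distrib, Finset.sum_add_distrib, Finset.sum_sub_distrib]
  have hT1 : ∑ k, y k * (2 * pdx n (Spray n F i) k x y)
      = 2 * ∑ k, y k * pdx n (Spray n F i) k x y := by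
    rw [Finset.mul_sum]; exact Finset.sum_congr rfl fun k _ => by ring
  have hT2 : ∑ k, y k * (∑ j, y j * pdx n (pdy n (Spray n F i) k) j x y)
      = 2 * ∑ k, y k * pdx n (Spray n F i) k x y := by
    rw [swap_sum']
    have hin : ∀ j, ∑ k, y k * (y j * pdx n (pdy n (Spray n F i) k) j x y)
        = y j * (2 * pdx n (Spray n F i) j x y) := by
      intro j
      have h1 : ∀ k, pdx n (pdy n (Spray n F i) k) j x y
          = pdy n (pdx n (Spray n F i) j) k x y :=
        fun k => pdx_pdy_comm hU (smSpray hU hF i) hx hy k j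
      calc ∑ k, y k * (y j * pdx n (pdy n (Spray n F i) k) j x y)
          = y j * ∑ k, y k * pdy n (pdx n (Spray n F i) j) k x y := by
            rw [Finset.mul_sum]
            exact Finset.sum_congr rfl fun k _ => by rw [h1 k]; ring
        _ = y j * (2 * pdx n (Spray n F i) j x y) := by
            rw [eulSprayX hU hF hx hy i j]
    rw [Finset.sum_congr rfl fun j _ => hin j, Finset.mul_sum]
    exact Finset.sum_congr rfl fun j _ => by ring
  have hT3 : ∑ k, y k * (2 * ∑ j, Spray n F j x y * pdy n (pdy n (Spray n F i) k) j x y)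
      = 2 * ∑ j, Spray n F j x y * pdy n (Spray n F i) j x y := by
    have h0 : ∀ k, y k * (2 * ∑ j, Spray n F j x y * pdy n (pdy n (Spray n F i) k) j x y)
        = ∑ j, y k * (2 * Spray n F j x y * pdy n (pdy n (Spray n F i) k) j x y) := by
      intro k
      simp only [Finset.mul_sum]
      exact Finset.sum_congr rfl fun j _ => by ring
    rw [Finset.sum_congr rfl fun k _ => h0 k, Finset.sum_comm]
    have hin : ∀ j, ∑ k, y k * (2 * Spray n F j x y * pdy n (pdy n (Spray n F i) k) j x y)
        = 2 * Spray n F j x y * pdy n (Spray n F i) j x y := by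
      intro j
      have h1 : ∀ k, pdy n (pdy n (Spray n F i) k) j x y
          = pdy n (pdy n (Spray n F i) j) k x y :=
        fun k => pdy_pdy_comm hU (smSpray hU hF i) hx hy k j
      calc ∑ k, y k * (2 * Spray n F j x y * pdy n (pdy n (Spray n F i) k) j x y)
          = 2 * Spray n F j x y * ∑ k, y k * pdy n (pdy n (Spray n F i) j) k x y := by
            rw [Finset.mul_sum]
            exact Finset.sum_congr rfl fun k _ => by rw [h1 k]; ring
        _ = 2 * Spray n F j x y * pdy n (Spray n F i) j x y := by
            rw [eulSprayY hU hF hx hy i j]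
    rw [Finset.sum_congr rfl fun j _ => hin j, Finset.mul_sum]
    exact Finset.sum_congr rfl fun j _ => by ring
  have hT4 : ∑ k, y k * (∑ j, pdy n (Spray n F i) j x y * pdy n (Spray n F j) k x y)
      = 2 * ∑ j, Spray n F j x y * pdy n (Spray n F i) j x y := by
    rw [swap_sum']
    have hin : ∀ j, ∑ k, y k * (pdy n (Spray n F i) j x y * pdy n (Spray n F j) k x y)
        = 2 * Spray n F j x y * pdy n (Spray n F i) j x y := by
      intro j
      calc ∑ k, y k * (pdy n (Spray n F i) j x y * pdy n (Spray n F j) k x y)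
          = pdy n (Spray n F i) j x y * ∑ k, y k * pdy n (Spray n F j) k x y := by
            rw [Finset.mul_sum]
            exact Finset.sum_congr rfl fun k _ => by ring
        _ = 2 * Spray n F j x y * pdy n (Spray n F i) j x y := by
            rw [eulSpray hU hF hx hy j]
            ring
    rw [Finset.sum_congr rfl fun j _ => hin j, Finset.mul_sum]
    exact Finset.sum_congr rfl fun j _ => by ring
  rw [hT1, hT2, hT3, hT4]
  ring

/-- `∑_j gm_{ij} y^j = ½ H_{y^i}`. -/
lemma gm_contract_right (i : Fin n) :
    ∑ j, gm n F i j x y * y j = (1 / 2 : ℝ) * pdy n (F2 n F) i x y := by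
  have h1 : ∀ j, gm n F i j x y * y j
      = (1 / 2 : ℝ) * (y j * pdy n (pdy n (F2 n F) i) j x y) := by
    intro j
    simp only [gm]
    rw [pdy_pdy_comm hU (smF2 hF) hx hy j i]
    ring
  rw [Finset.sum_congr rfl fun j _ => h1 j, ← Finset.mul_sum, eulHy hU hF hx hy i]

lemma gm_contract_left (k : Fin n) :
    ∑ j, y j * gm n F j k x y = (1 / 2 : ℝ) * pdy n (F2 n F) k x y := by
  have h1 : ∀ j, y j * gm n F j k x y
      = (1 / 2 : ℝ) * (y j * pdy n (pdy n (F2 n F) k) j x y) := by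
    intro j
    simp only [gm]
    ring
  rw [Finset.sum_congr rfl fun j _ => h1 j, ← Finset.mul_sum, eulHy hU hF hx hy k]

/-- `∑_j y^j R_{jk} = 0`. -/
lemma yRlow (k : Fin n) : ∑ j, y j * Rlow n F j k x y = 0 := by
  have h1 : ∀ j, y j * Rlow n F j k x y
      = ∑ i, gm n F i j x y * y j * RiemUp n F i k x y := by
    intro j
    simp only [Rlow]
    rw [Finset.mul_sum]
    exact Finset.sum_congr rfl fun i _ => by ring
  rw [Finset.sum_congr rfl fun j _ => h1 j, Finset.sum_comm]
  have h2 : ∀ i, ∑ j, gm n F i j x y * y j * RiemUp n F i k x y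
      = (1 / 2 : ℝ) * (pdy n (F2 n F) i x y * RiemUp n F i k x y) := by
    intro i
    rw [show ∀ z : ℝ, (1/2 : ℝ) * (pdy n (F2 n F) i x y * z)
        = ((1/2 : ℝ) * pdy n (F2 n F) i x y) * z from fun z => by ring]
    rw [← gm_contract_right hU hF hx hy i, Finset.sum_mul]
  rw [Finset.sum_congr rfl fun i _ => h2 i, ← Finset.mul_sum, ellR hU hF hx hy k]
  ring

/-- `∑_k R_{jk} y^k = 0`. -/
lemma Rlow_y (j : Fin n) : ∑ k, Rlow n F j k x y * y k = 0 := by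
  have h1 : ∀ k, Rlow n F j k x y * y k
      = ∑ i, gm n F i j x y * (y k * RiemUp n F i k x y) := by
    intro k
    simp only [Rlow]
    rw [Finset.sum_mul]
    exact Finset.sum_congr rfl fun i _ => by ring
  rw [Finset.sum_congr rfl fun k _ => h1 k, Finset.sum_comm]
  have h2 : ∀ i, ∑ k, gm n F i j x y * (y k * RiemUp n F i k x y)
      = gm n F i j x y * ∑ k, y k * RiemUp n F i k x y := by
    intro i
    rw [Finset.mul_sum]
  rw [Finset.sum_congr rfl fun i _ => by rw [h2 i, Riem_y hU hF hx hy i, mul_zero]]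
  simp

/-- `H_{y^i} = 2 F F_{y^i}`. -/
lemma pdyH_eq (i : Fin n) :
    pdy n (F2 n F) i x y = 2 * F x y * pdy n F i x y := by
  have hfd : DifferentiableAt ℝ (F x) y := (smF hF).diffY hU hx hy
  have hfun : (F2 n F) x = fun y' => F x y' * F x y' := by
    funext y'
    simp [F2, sq]
  have := fderiv_fun_mul (𝕜 := ℝ) hfd hfd
  simp only [pdy, hfun, this]
  simp [smul_eq_mul]
  ring

lemma eulerF : ∑ i, y i * pdy n F i x y = F x y := by
  simpa using hom_euler hU (smF hF) (homF hF) hx hy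

/-- `∑_k h_{jk} y^k = 0`. -/
lemma hm_y_right (j : Fin n) : ∑ k, hm n F j k x y * y k = 0 := by
  have h1 : ∀ k, hm n F j k x y * y k
      = gm n F j k x y * y k - Fy n F j x y * (y k * pdy n F k x y) := by
    intro k
    simp only [hm, Fy]
    ring
  rw [Finset.sum_congr rfl fun k _ => h1 k, Finset.sum_sub_distrib,
    gm_contract_right hU hF hx hy j, ← Finset.mul_sum, eulerF hU hF hx hy,
    pdyH_eq hU hF hx hy j]
  simp only [Fy]
  ring

lemma hm_y_left (k : Fin n) : ∑ j, y j * hm n F j k x y = 0 := by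
  have h1 : ∀ j, y j * hm n F j k x y
      = y j * gm n F j k x y - (y j * pdy n F j x y) * Fy n F k x y := by
    intro j
    simp only [hm, Fy]
    ring
  rw [Finset.sum_congr rfl fun j _ => h1 j, Finset.sum_sub_distrib,
    gm_contract_left hU hF hx hy k, ← Finset.sum_mul, eulerF hU hF hx hy,
    pdyH_eq hU hF hx hy k]
  simp only [Fy]
  ring

end contractions


section li

variable {y v : E n}

lemma li_ne₁ (h : LinearIndependent ℝ ![y, v]) : y ≠ 0 := h.ne_zero 0

lemma li_ne₂ (h : LinearIndependent ℝ ![y, v]) : v ≠ 0 := h.ne_zero 1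

lemma li_comm (h : LinearIndependent ℝ ![y, v]) : LinearIndependent ℝ ![v, y] := by
  rw [LinearIndependent.pair_iff] at h ⊢
  intro s t hst
  have := h t s (by rw [← hst]; abel)
  exact ⟨this.2, this.1⟩

lemma li_shear (h : LinearIndependent ℝ ![y, v]) (t : ℝ) :
    LinearIndependent ℝ ![y + t • v, v] := by
  rw [LinearIndependent.pair_iff] at h ⊢
  intro s r hsr
  have h2 : s • y + (s * t + r) • v = 0 := by
    rw [← hsr]; module
  obtain ⟨h3, h4⟩ := h s (s * t + r) h2
  refine ⟨h3, ?_⟩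
  rw [h3] at h4
  linarith

lemma li_smul₁ {a : ℝ} (ha : a ≠ 0) (h : LinearIndependent ℝ ![y, v]) :
    LinearIndependent ℝ ![a • y, v] := by
  rw [LinearIndependent.pair_iff] at h ⊢
  intro s r hsr
  have h2 : (s * a) • y + r • v = 0 := by rw [← hsr]; module
  have := h (s * a) r h2
  exact ⟨by rcases mul_eq_zero.mp this.1 with h' | h'; exact h'; exact absurd h' ha, this.2⟩

lemma li_smul₂ {c : ℝ} (hc : c ≠ 0) (h : LinearIndependent ℝ ![y, v]) :
    LinearIndependent ℝ ![y, c • v] := by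
  rw [LinearIndependent.pair_iff] at h ⊢
  intro s r hsr
  have h2 : s • y + (r * c) • v = 0 := by rw [← hsr]; module
  have := h s (r * c) h2
  exact ⟨this.1, by rcases mul_eq_zero.mp this.2 with h' | h'; exact h'; exact absurd h' hc⟩

lemma li_ne_shift (h : LinearIndependent ℝ ![y, v]) (t : ℝ) : y + t • v ≠ 0 := by
  intro h0
  have h2 : (1 : ℝ) • y + t • v = 0 := by rw [← h0]; module
  exact one_ne_zero (LinearIndependent.pair_iff.mp h 1 t h2).1

end li

lemma mul_double_sum {m : ℕ} (c : ℝ) (X : Fin m → Fin m → ℝ) :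
    ∑ j, ∑ k, c * X j k = c * ∑ j, ∑ k, X j k := by
  rw [Finset.mul_sum]
  exact Finset.sum_congr rfl fun j _ => by rw [Finset.mul_sum]

section positivity

variable {F : E n → E n → ℝ} {x y v : E n}
variable (hU : IsOpen U) (hF : IsFinsler n U F) (hx : x ∈ U)
include hU hF hx

lemma b_pos (hu : ∀ _ : Unit, True) (hy : y ≠ 0) {u : E n} (hu0 : u ≠ 0) :
    0 < ∑ j, ∑ k, gm n F j k x y * u j * u k := by
  have hpd := (hF.posdef x hx y hy).dotProduct_mulVec_pos hu0
  have heq : dotProduct (star u) ((gmat n F x y).mulVec u)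
      = ∑ j, ∑ k, gm n F j k x y * u j * u k := by
    simp only [dotProduct, Matrix.mulVec, star_trivial]
    refine Finset.sum_congr rfl fun j _ => ?_
    rw [show (gmat n F x y) j = fun k => gm n F j k x y from rfl]
    simp only [dotProduct]
    rw [Finset.mul_sum]
    refine Finset.sum_congr rfl fun k _ => by ring
  rw [heq] at hpd
  exact hpd

lemma b_yy (hy : y ≠ 0) :
    ∑ j, ∑ k, gm n F j k x y * y j * y k = (F x y) ^ 2 := by
  have h1 : ∀ j, ∑ k, gm n F j k x y * y j * y k
      = y j * ((1 / 2 : ℝ) * pdy n (F2 n F) j x y) := by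
    intro j
    rw [← gm_contract_right hU hF hx hy j, Finset.mul_sum]
    exact Finset.sum_congr rfl fun k _ => by ring
  rw [Finset.sum_congr rfl fun j _ => h1 j]
  have h2 : ∑ j, y j * ((1 / 2 : ℝ) * pdy n (F2 n F) j x y)
      = (1 / 2 : ℝ) * ∑ j, y j * pdy n (F2 n F) j x y := by
    rw [Finset.mul_sum]
    exact Finset.sum_congr rfl fun j _ => by ring
  rw [h2, eulH hU hF hx hy]
  simp only [F2]
  ring

lemma b_yv (hy : y ≠ 0) :
    ∑ j, ∑ k, gm n F j k x y * y j * v k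
      = F x y * ∑ k, pdy n F k x y * v k := by
  rw [Finset.sum_comm]
  have h1 : ∀ k, ∑ j, gm n F j k x y * y j * v k
      = (F x y * pdy n F k x y) * v k := by
    intro k
    have : ∑ j, y j * gm n F j k x y = (1 / 2 : ℝ) * pdy n (F2 n F) k x y :=
      gm_contract_left hU hF hx hy k
    rw [pdyH_eq hU hF hx hy k] at this
    calc ∑ j, gm n F j k x y * y j * v k
        = (∑ j, y j * gm n F j k x y) * v k := by
          rw [Finset.sum_mul]
          exact Finset.sum_congr rfl fun j _ => by ring
      _ = (F x y * pdy n F k x y) * v k := by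
          rw [show (F x y * pdy n F k x y) = ∑ j, y j * gm n F j k x y from by
            rw [this]; ring]
  rw [Finset.sum_congr rfl fun k _ => h1 k, Finset.mul_sum]
  exact Finset.sum_congr rfl fun k _ => by ring

lemma b_symm (hy : y ≠ 0) (u w : E n) :
    ∑ j, ∑ k, gm n F j k x y * u j * w k = ∑ j, ∑ k, gm n F j k x y * w j * u k := by
  rw [Finset.sum_comm]
  refine Finset.sum_congr rfl fun k _ => Finset.sum_congr rfl fun j _ => ?_
  rw [gm_symm hU hF hx hy j k]
  ring

lemma hm_vv_eq (hy : y ≠ 0) :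
    ∑ j, ∑ k, hm n F j k x y * v j * v k
      = (∑ j, ∑ k, gm n F j k x y * v j * v k) - (∑ k, pdy n F k x y * v k) ^ 2 := by
  have h1 : ∀ j k, hm n F j k x y * v j * v k
      = gm n F j k x y * v j * v k - (pdy n F j x y * v j) * (pdy n F k x y * v k) := by
    intro j k
    simp only [hm, Fy]
    ring
  rw [Finset.sum_congr rfl fun j _ => Finset.sum_congr rfl fun k _ => h1 j k]
  rw [Finset.sum_congr rfl fun j _ => Finset.sum_sub_distrib _ _, Finset.sum_sub_distrib]
  congr 1
  rw [sq, Finset.sum_mul_sum]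

/-- Positivity of the flag-curvature denominator. -/
lemma denom_pos (hli : LinearIndependent ℝ ![y, v]) :
    0 < (F x y) ^ 2 * ∑ j, ∑ k, hm n F j k x y * v j * v k := by
  have hy : y ≠ 0 := li_ne₁ hli
  set α := (F x y) ^ 2 with hα
  set q := ∑ k, pdy n F k x y * v k with hq
  set bvv := ∑ j, ∑ k, gm n F j k x y * v j * v k with hbvv
  have hαpos : 0 < α := by
    have := hF.pos x hx y hy
    positivity
  -- the vector w = α • v - (F q) • y is nonzero
  set β := F x y * q with hβ
  have hw0 : α • v - β • y ≠ 0 := by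
    intro h0
    have h2 : (-β) • y + α • v = 0 := by
      calc (-β) • y + α • v = α • v - β • y := by module
        _ = 0 := h0
    exact hαpos.ne' ((LinearIndependent.pair_iff.mp hli (-β) α h2).2)
  have hbww := b_pos hU hF hx (fun _ => trivial) hy hw0
  have hexp : ∑ j, ∑ k, gm n F j k x y * (α • v - β • y) j * (α • v - β • y) k
      = α ^ 2 * bvv - α * β * (∑ j, ∑ k, gm n F j k x y * v j * y k)
        - α * β * (∑ j, ∑ k, gm n F j k x y * y j * v k) + β ^ 2 * α := by
    have h1 : ∀ j k, gm n F j k x y * (α • v - β • y) j * (α • v - β • y) k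
        = α ^ 2 * (gm n F j k x y * v j * v k)
          - α * β * (gm n F j k x y * v j * y k)
          - α * β * (gm n F j k x y * y j * v k)
          + β ^ 2 * (gm n F j k x y * y j * y k) := by
      intro j k
      simp only [Pi.sub_apply, Pi.smul_apply, smul_eq_mul]
      ring
    rw [Finset.sum_congr rfl fun j _ => Finset.sum_congr rfl fun k _ => h1 j k]
    simp only [Finset.sum_add_distrib, Finset.sum_sub_distrib]
    rw [mul_double_sum, mul_double_sum, mul_double_sum, mul_double_sum,
      b_yy hU hF hx hy, ← hα, ← hbvv]
  have hsy : ∑ j, ∑ k, gm n F j k x y * y j * v k = β := by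
    rw [b_yv hU hF hx hy, hβ, hq]
  have hsv : ∑ j, ∑ k, gm n F j k x y * v j * y k = β := by
    rw [b_symm hU hF hx hy v y, hsy]
  rw [hexp, hsy, hsv] at hbww
  have hkey : 0 < α * bvv - β ^ 2 := by nlinarith [hαpos, hbww]
  rw [hm_vv_eq hU hF hx hy]
  have hβ2 : β ^ 2 = α * q ^ 2 := by rw [hβ, hα]; ring
  nlinarith [hkey, hαpos]

end positivity



section kinv

variable {F : E n → E n → ℝ} {x y v : E n}

lemma quad_shift {y : E n} (T : Fin n → Fin n → ℝ)
    (hL : ∀ k, ∑ j, y j * T j k = 0) (hR : ∀ j, ∑ k, T j k * y k = 0)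
    (v : E n) (s : ℝ) :
    ∑ j, ∑ k, T j k * (v + s • y) j * (v + s • y) k
      = ∑ j, ∑ k, T j k * v j * v k := by
  have h1 : ∀ j k, T j k * (v + s • y) j * (v + s • y) k
      = T j k * v j * v k + s * (y j * T j k * v k)
        + s * (v j * (T j k * y k)) + (s * s) * (y j * (T j k * y k)) := by
    intro j k
    simp only [Pi.add_apply, Pi.smul_apply, smul_eq_mul]
    ring
  rw [Finset.sum_congr rfl fun j _ => Finset.sum_congr rfl fun k _ => h1 j k]
  simp only [Finset.sum_add_distrib]
  have p2 : ∑ j, ∑ k, s * (y j * T j k * v k) = 0 := by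
    rw [mul_double_sum, Finset.sum_comm]
    rw [Finset.sum_congr rfl fun k (_ : k ∈ Finset.univ) => by
      rw [← Finset.sum_mul, hL k, zero_mul]]
    simp
  have p3 : ∑ j, ∑ k, s * (v j * (T j k * y k)) = 0 := by
    rw [mul_double_sum]
    rw [Finset.sum_congr rfl fun j (_ : j ∈ Finset.univ) => by
      rw [← Finset.mul_sum, hR j, mul_zero]]
    simp
  have p4 : ∑ j, ∑ k, (s * s) * (y j * (T j k * y k)) = 0 := by
    rw [mul_double_sum]
    rw [Finset.sum_congr rfl fun j (_ : j ∈ Finset.univ) => by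
      rw [← Finset.mul_sum, hR j, mul_zero]]
    simp
  rw [p2, p3, p4]
  ring

/-- Scaling the flag in the transverse direction. -/
lemma K_scale_v {c : ℝ} (hc : c ≠ 0) : K n F x y (c • v) = K n F x y v := by
  simp only [K]
  have hnum : ∑ j, ∑ k, Rlow n F j k x y * (c • v) j * (c • v) k
      = c ^ 2 * ∑ j, ∑ k, Rlow n F j k x y * v j * v k := by
    rw [← mul_double_sum]
    refine Finset.sum_congr rfl fun j _ => Finset.sum_congr rfl fun k _ => ?_
    simp only [Pi.smul_apply, smul_eq_mul]
    ring
  have hden : ∑ j, ∑ k, hm n F j k x y * (c • v) j * (c • v) k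
      = c ^ 2 * ∑ j, ∑ k, hm n F j k x y * v j * v k := by
    rw [← mul_double_sum]
    refine Finset.sum_congr rfl fun j _ => Finset.sum_congr rfl fun k _ => ?_
    simp only [Pi.smul_apply, smul_eq_mul]
    ring
  rw [hnum, hden,
    show F x y ^ 2 * (c ^ 2 * ∑ j, ∑ k, hm n F j k x y * v j * v k)
      = c ^ 2 * (F x y ^ 2 * ∑ j, ∑ k, hm n F j k x y * v j * v k) from by ring,
    mul_div_mul_left _ _ (pow_ne_zero 2 hc)]

variable (hU : IsOpen U) (hF : IsFinsler n U F) (hx : x ∈ U)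
include hU hF hx

/-- Shearing the transverse direction by the flag pole. -/
lemma K_shear_v (hy : y ≠ 0) (s : ℝ) : K n F x y (v + s • y) = K n F x y v := by
  simp only [K]
  rw [quad_shift (fun j k => Rlow n F j k x y)
      (fun k => yRlow hU hF hx hy k) (fun j => Rlow_y hU hF hx hy j) v s,
    quad_shift (fun j k => hm n F j k x y)
      (fun k => hm_y_left hU hF hx hy k) (fun j => hm_y_right hU hF hx hy j) v s]

end kinv


section m1

variable {F : E n → E n → ℝ} {x y v : E n}
variable (hU : IsOpen U) (hF : IsFinsler n U F) (hx : x ∈ U)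
include hU hF hx

/-- Shifting the flag pole along the transverse direction, assuming the derivative
hypothesis. -/
lemma K_shift_y
    (hyp : ∀ y v : E n, LinearIndependent ℝ ![y, v] →
      deriv (fun t : ℝ => K n F x (y + t • v) v) 0 = 0)
    (hli : LinearIndependent ℝ ![y, v]) (t : ℝ) :
    K n F x (y + t • v) v = K n F x y v := by
  have hγ : ∀ t : ℝ, DifferentiableAt ℝ (fun s : ℝ => y + s • v) t := by
    intro t
    exact (differentiableAt_const y).add (differentiableAt_id.smul_const v)
  have hdiff : Differentiable ℝ (fun t : ℝ => K n F x (y + t • v) v) := by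
    intro t
    have hyt : y + t • v ≠ 0 := li_ne_shift hli t
    have hlit : LinearIndependent ℝ ![y + t • v, v] := li_shear hli t
    have hnum : DifferentiableAt ℝ
        (fun t : ℝ => ∑ j, ∑ k, Rlow n F j k x (y + t • v) * v j * v k) t := by
      refine DifferentiableAt.fun_sum fun j _ => DifferentiableAt.fun_sum fun k _ => ?_
      have hcomp : DifferentiableAt ℝ (fun t : ℝ => Rlow n F j k x (y + t • v)) t := by
        have h' : DifferentiableAt ℝ ((Rlow n F j k x) ∘ (fun s : ℝ => y + s • v)) t :=
          DifferentiableAt.comp t ((smRlow hU hF j k).diffY hU hx hyt) (hγ t)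
        exact h'
      exact (hcomp.mul_const (v j)).mul_const (v k)
    have hden : DifferentiableAt ℝ
        (fun t : ℝ => (F x (y + t • v)) ^ 2 *
          ∑ j, ∑ k, hm n F j k x (y + t • v) * v j * v k) t := by
      have hFc : DifferentiableAt ℝ (fun t : ℝ => F x (y + t • v)) t := by
        have h' : DifferentiableAt ℝ ((F x) ∘ (fun s : ℝ => y + s • v)) t :=
          DifferentiableAt.comp t ((smF hF).diffY hU hx hyt) (hγ t)
        exact h'
      refine (hFc.pow 2).mul ?_
      refine DifferentiableAt.fun_sum fun j _ => DifferentiableAt.fun_sum fun k _ => ?_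
      have hcomp : DifferentiableAt ℝ (fun t : ℝ => hm n F j k x (y + t • v)) t := by
        have h' : DifferentiableAt ℝ ((hm n F j k x) ∘ (fun s : ℝ => y + s • v)) t :=
          DifferentiableAt.comp t ((smHm hU hF j k).diffY hU hx hyt) (hγ t)
        exact h'
      exact (hcomp.mul_const (v j)).mul_const (v k)
    have hdne : (F x (y + t • v)) ^ 2 *
        (∑ j, ∑ k, hm n F j k x (y + t • v) * v j * v k) ≠ 0 :=
      (denom_pos hU hF hx hlit).ne'
    exact hnum.div hden hdne
  have hderiv : ∀ t : ℝ, deriv (fun t : ℝ => K n F x (y + t • v) v) t = 0 := by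
    intro t
    have h0 := hyp (y + t • v) v (li_shear hli t)
    have heq : (fun s : ℝ => K n F x ((y + t • v) + s • v) v)
        = fun s : ℝ => K n F x (y + (t + s) • v) v := by
      funext s
      rw [show (y + t • v) + s • v = y + (t + s) • v from by rw [add_smul]; abel]
    rw [heq] at h0
    calc deriv (fun t : ℝ => K n F x (y + t • v) v) t
        = deriv (fun s : ℝ => K n F x (y + (t + s) • v) v) 0 := by
          rw [deriv_comp_const_add (fun t : ℝ => K n F x (y + t • v) v) t 0]
          norm_num
      _ = 0 := h0
  have := is_const_of_deriv_eq_zero hdiff hderiv t 0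
  simpa using this

/-- Symmetry of the flag curvature in the two spanning vectors. -/
lemma K_swap
    (hyp : ∀ y v : E n, LinearIndependent ℝ ![y, v] →
      deriv (fun t : ℝ => K n F x (y + t • v) v) 0 = 0)
    (hli : LinearIndependent ℝ ![y, v]) :
    K n F x v y = K n F x y v := by
  have h1 : K n F x (y + v) v = K n F x y v := by
    have := K_shift_y hU hF hx hyp hli 1
    simpa using this
  have hli2 : LinearIndependent ℝ ![y + v, v] := by
    have := li_shear hli 1
    simpa using this
  have h2 : K n F x (y + v) (v + (-1 : ℝ) • (y + v)) = K n F x (y + v) v :=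
    K_shear_v hU hF hx (li_ne₁ hli2) (-1)
  have h3 : v + (-1 : ℝ) • (y + v) = -y := by module
  have h4 : K n F x (y + v) ((-1 : ℝ) • y) = K n F x (y + v) y := K_scale_v (by norm_num)
  have h5 : K n F x (v + y) y = K n F x v y := by
    have := K_shift_y hU hF hx hyp (li_comm hli) 1
    simpa using this
  have h6 : (-1 : ℝ) • y = -y := by module
  calc K n F x v y = K n F x (v + y) y := h5.symm
    _ = K n F x (y + v) y := by rw [add_comm]
    _ = K n F x (y + v) ((-1 : ℝ) • y) := h4.symm
    _ = K n F x (y + v) (-y) := by rw [h6]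
    _ = K n F x (y + v) (v + (-1 : ℝ) • (y + v)) := by rw [h3]
    _ = K n F x (y + v) v := h2
    _ = K n F x y v := h1

/-- Scaling the flag pole. -/
lemma K_scale_y
    (hyp : ∀ y v : E n, LinearIndependent ℝ ![y, v] →
      deriv (fun t : ℝ => K n F x (y + t • v) v) 0 = 0)
    (hli : LinearIndependent ℝ ![y, v]) {a : ℝ} (ha : a ≠ 0) :
    K n F x (a • y) v = K n F x y v := by
  have hli' : LinearIndependent ℝ ![a • y, v] := li_smul₁ ha hli
  calc K n F x (a • y) v
      = K n F x v (a • y) := (K_swap hU hF hx hyp hli').symm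
    _ = K n F x v y := K_scale_v ha
    _ = K n F x y v := K_swap hU hF hx hyp hli

end m1



end Aux

lemma span_shift (y v : E n) (t : ℝ) :
    Submodule.span ℝ {y + t • v, v} = Submodule.span ℝ ({y, v} : Set (E n)) := by
  refine le_antisymm (Submodule.span_le.mpr ?_) (Submodule.span_le.mpr ?_)
  · intro z hz
    simp only [Set.mem_insert_iff, Set.mem_singleton_iff] at hz
    rcases hz with rfl | rfl
    · exact Submodule.mem_span_pair.mpr ⟨1, t, by module⟩
    · exact Submodule.mem_span_pair.mpr ⟨0, 1, by module⟩
  · intro z hz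
    simp only [Set.mem_insert_iff, Set.mem_singleton_iff] at hz
    rcases hz with rfl | rfl
    · exact Submodule.mem_span_pair.mpr ⟨1, -t, by module⟩
    · exact Submodule.mem_span_pair.mpr ⟨0, 1, by module⟩


/-- `F` is of sectional flag curvature iff `d/dt K(x, y+tv, v)|₀ = 0`
for all linearly independent `y, v`. -/
theorem sectional_flag_curvature_iff_deriv (n : ℕ) (hn : 2 ≤ n)
    (U : Set (E n)) (hU : IsOpen U) (F : E n → E n → ℝ)
    (hF : IsFinsler n U F) :
    SectionalFlagCurv n U F ↔
      ∀ x ∈ U, ∀ y v : E n, LinearIndependent ℝ ![y, v] →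
        deriv (fun t : ℝ => K n F x (y + t • v) v) 0 = 0 := by
  constructor
  · -- forward direction
    intro hsec x hx y v hli
    have hconst : (fun t : ℝ => K n F x (y + t • v) v) = fun _ : ℝ => K n F x y v := by
      funext t
      exact hsec x hx (y + t • v) v y v (li_shear hli t) hli (span_shift y v t)
    rw [hconst]
    exact deriv_const 0 _
  · -- backward direction
    intro hyp x hx y v y' v' hli hli' hspan
    have hypx : ∀ y v : E n, LinearIndependent ℝ ![y, v] →
        deriv (fun t : ℝ => K n F x (y + t • v) v) 0 = 0 :=
      fun y v h => hyp x hx y v h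
    -- coefficients of y', v' in terms of y, v
    have hy'mem : y' ∈ Submodule.span ℝ ({y, v} : Set (E n)) := by
      rw [hspan]
      exact Submodule.subset_span (Set.mem_insert _ _)
    have hv'mem : v' ∈ Submodule.span ℝ ({y, v} : Set (E n)) := by
      rw [hspan]
      exact Submodule.subset_span (by simp)
    obtain ⟨a, b, hab⟩ := Submodule.mem_span_pair.mp hy'mem
    obtain ⟨c, d, hcd⟩ := Submodule.mem_span_pair.mp hv'mem
    have hdet : a * d - b * c ≠ 0 := by
      intro h0
      have e1 : d • y' + (-b) • v' = (d * a - b * c) • y := by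
        rw [← hab, ← hcd]; module
      have e1' : d • y' + (-b) • v' = 0 := by
        rw [e1, show d * a - b * c = 0 from by linarith, zero_smul]
      obtain ⟨hd0, hb0⟩ := LinearIndependent.pair_iff.mp hli' d (-b) e1'
      have e2 : (-c) • y' + a • v' = (a * d - c * b) • v := by
        rw [← hab, ← hcd]; module
      have e2' : (-c) • y' + a • v' = 0 := by
        rw [e2, show a * d - c * b = 0 from by linarith, zero_smul]
      obtain ⟨hc0, ha0⟩ := LinearIndependent.pair_iff.mp hli' (-c) a e2'
      have : y' = 0 := by
        rw [← hab, ha0, neg_eq_zero.mp hb0]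
        simp
      exact li_ne₁ hli' this
    symm
    by_cases ha : a = 0
    · -- a = 0 : y' is a multiple of v
      have hb : b ≠ 0 := by
        intro hb
        refine li_ne₁ hli' ?_
        rw [← hab, ha, hb]
        simp
      have hc : c ≠ 0 := fun hc => hdet (by rw [ha, hc]; ring)
      have hliv : LinearIndependent ℝ ![v, v'] := by
        rw [LinearIndependent.pair_iff]
        intro s t hst
        have h2 : (t * c) • y + (s + t * d) • v = 0 := by
          rw [← hcd] at hst
          rw [← hst]; module
        obtain ⟨h3, h4⟩ := LinearIndependent.pair_iff.mp hli (t * c) (s + t * d) h2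
        have ht : t = 0 := by
          rcases mul_eq_zero.mp h3 with h | h
          · exact h
          · exact absurd h hc
        exact ⟨by rw [ht] at h4; linarith, ht⟩
      calc K n F x y' v' = K n F x (b • v) v' := by rw [← hab, ha, zero_smul, zero_add]
        _ = K n F x v v' := K_scale_y hU hF hx hypx hliv hb
        _ = K n F x v (c • y + d • v) := by rw [hcd]
        _ = K n F x v (c • y) := K_shear_v hU hF hx (li_ne₂ hli) d
        _ = K n F x v y := K_scale_v hc
        _ = K n F x y v := K_swap hU hF hx hypx hli
    · -- a ≠ 0
      have hliw : LinearIndependent ℝ ![y + (b / a) • v, v] := li_shear hli (b / a)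
      have haw : a • (y + (b / a) • v) = y' := by
        rw [← hab, smul_add, smul_smul, mul_div_cancel₀ b ha]
      have hliwv' : LinearIndependent ℝ ![y + (b / a) • v, v'] := by
        have h1 : LinearIndependent ℝ ![a • (y + (b / a) • v), v'] := by
          rw [haw]; exact hli'
        have h2 := li_smul₁ (inv_ne_zero ha) h1
        rw [smul_smul, inv_mul_cancel₀ ha, one_smul] at h2
        exact h2
      have hea : (a * d - b * c) / a ≠ 0 := div_ne_zero hdet ha
      have hv'w : v' = ((a * d - b * c) / a) • v + c • (y + (b / a) • v) := by
        rw [← hcd, smul_add, smul_smul]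
        have hcoef : c * (b / a) + (a * d - b * c) / a = d := by
          field_simp
          ring
        rw [show ((a * d - b * c) / a) • v + (c • y + (c * (b / a)) • v)
            = c • y + (c * (b / a) + (a * d - b * c) / a) • v from by module, hcoef]
      calc K n F x y' v' = K n F x (a • (y + (b / a) • v)) v' := by rw [haw]
        _ = K n F x (y + (b / a) • v) v' := K_scale_y hU hF hx hypx hliwv' ha
        _ = K n F x (y + (b / a) • v) (((a * d - b * c) / a) • v + c • (y + (b / a) • v)) := by
            rw [← hv'w]
        _ = K n F x (y + (b / a) • v) (((a * d - b * c) / a) • v) :=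
            K_shear_v hU hF hx (li_ne_shift hli (b / a)) c
        _ = K n F x (y + (b / a) • v) v := K_scale_v hea
        _ = K n F x y v := K_shift_y hU hF hx hypx hli (b / a)



end Paper
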